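/- arXiv:2509.11261 — 7 statements merged into one kernel-verified Lean document; each statement's English description precedes it below -/
import Mathlib

section
/- Let X be a finite set and let S be a family of 3-element subsets of X such that every element of X is contained in exactly 3 members of S. Then S can be partitioned into 7 subfamilies S_1, …, S_7 such that, for each i ∈ {1,…,7}, the members of S_i are pairwise disjoint. -/
/-!
Each element of a triple `T ∈ S` lies in exactly two other members of `S`, so `T` meets at most
`3 · 2 = 6` other members. The intersection graph of `S` therefore has maximum degree at most 6,
and colouring its vertices greedily uses at most 7 colours.
-/

open Finset

namespace SimpleGraph

variable {β : Type*} [DecidableEq β] (G : SimpleGraph β) [DecidableRel G.Adj]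

theorem exists_coloring_on_of_degree_le {k : ℕ} (s : Finset β)
    (hdeg : ∀ a ∈ s, #{b ∈ s | G.Adj a b} ≤ k) :
    ∃ f : β → Fin (k + 1), ∀ a ∈ s, ∀ b ∈ s, G.Adj a b → f a ≠ f b := by
  induction s using Finset.induction_on with
  | empty => exact ⟨fun _ => 0, by simp⟩
  | @insert a s ha ih =>
    have hdeg_s : ∀ b ∈ insert a s, #{c ∈ s | G.Adj b c} ≤ k := fun b hb =>
      (card_le_card (filter_subset_filter _ (subset_insert a s))).trans (hdeg b hb)
    obtain ⟨f, hf⟩ := ih fun b hb => hdeg_s b (mem_insert_of_mem hb)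
    have hnbrs : #({b ∈ s | G.Adj a b}.image f) < #(univ : Finset (Fin (k + 1))) := by
      rw [card_univ, Fintype.card_fin, Nat.lt_succ_iff]
      exact card_image_le.trans (hdeg_s a (mem_insert_self a s))
    obtain ⟨c, -, hc⟩ := exists_mem_notMem_of_card_lt_card hnbrs
    have hfree : ∀ b ∈ s, G.Adj a b → f b ≠ c := fun b hb hab hbc =>
      hc (mem_image.2 ⟨b, mem_filter.2 ⟨hb, hab⟩, hbc⟩)
    refine ⟨Function.update f a c, ?_⟩
    have hne : ∀ b ∈ s, b ≠ a := fun b hb hba => ha (hba ▸ hb)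
    intro b hb b' hb' hadj
    rcases mem_insert.1 hb with rfl | hbs <;> rcases mem_insert.1 hb' with rfl | hbs'
    · exact (G.irrefl hadj).elim
    · rw [Function.update_self, Function.update_of_ne (hne b' hbs')]
      exact (hfree b' hbs' hadj).symm
    · rw [Function.update_self, Function.update_of_ne (hne b hbs)]
      exact hfree b hbs hadj.symm
    · rw [Function.update_of_ne (hne b hbs), Function.update_of_ne (hne b' hbs')]
      exact hf b hbs b' hbs' hadj

end SimpleGraph

@[simps]
def intersectionGraph (α : Type*) : SimpleGraph (Finset α) where
  Adj T T' := T ≠ T' ∧ ¬Disjoint T T'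
  symm := ⟨fun _ _ h => ⟨h.1.symm, fun hd => h.2 hd.symm⟩⟩
  loopless := ⟨fun _ h => h.1 rfl⟩

instance {α : Type*} [DecidableEq α] : DecidableRel (intersectionGraph α).Adj :=
  fun T T' => inferInstanceAs (Decidable (T ≠ T' ∧ ¬Disjoint T T'))

theorem card_filter_intersectionGraph_adj_le {α : Type*} [DecidableEq α] {S : Finset (Finset α)}
    {T : Finset α} (hT : T ∈ S) :
    #{T' ∈ S | (intersectionGraph α).Adj T T'} ≤ ∑ x ∈ T, (#{T' ∈ S | x ∈ T'} - 1) := by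
  have hcover : {T' ∈ S | (intersectionGraph α).Adj T T'} ⊆
      T.biUnion fun x => {T' ∈ S | x ∈ T'}.erase T := by
    intro T' hT'
    simp only [mem_filter, intersectionGraph_adj] at hT'
    obtain ⟨hT'S, hne, hnd⟩ := hT'
    obtain ⟨x, hxT, hxT'⟩ := not_disjoint_iff.1 hnd
    exact mem_biUnion.2 ⟨x, hxT, mem_erase.2 ⟨Ne.symm hne, mem_filter.2 ⟨hT'S, hxT'⟩⟩⟩
  calc #{T' ∈ S | (intersectionGraph α).Adj T T'}
      ≤ #(T.biUnion fun x => {T' ∈ S | x ∈ T'}.erase T) := card_le_card hcover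
    _ ≤ ∑ x ∈ T, #({T' ∈ S | x ∈ T'}.erase T) := card_biUnion_le
    _ = ∑ x ∈ T, (#{T' ∈ S | x ∈ T'} - 1) := sum_congr rfl fun x hx =>
        card_erase_of_mem (mem_filter.2 ⟨hT, hx⟩)

/-- If `S` is an RX3C family on a finite set `X` (every member of `S` is a
3-element subset of `X` and every element of `X` lies in exactly 3 members of `S`), then `S`
can be partitioned into 7 subfamilies `S_1, …, S_7` (encoded by a coloring `f` with 7 colors)
such that within each subfamily the members are pairwise disjoint. -/
theorem stmt_1 {α : Type*} [DecidableEq α] (X : Finset α) (S : Finset (Finset α))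
    (hsub : ∀ T ∈ S, T ⊆ X) (h3 : ∀ T ∈ S, T.card = 3)
    (hocc : ∀ x ∈ X, (S.filter (fun T => x ∈ T)).card = 3) :
    ∃ f : Finset α → Fin 7, ∀ T ∈ S, ∀ T' ∈ S, T ≠ T' → f T = f T' → Disjoint T T' := by
  have hdeg : ∀ T ∈ S, #{T' ∈ S | (intersectionGraph α).Adj T T'} ≤ 6 := fun T hT =>
    calc #{T' ∈ S | (intersectionGraph α).Adj T T'}
        ≤ ∑ x ∈ T, (#{T' ∈ S | x ∈ T'} - 1) := card_filter_intersectionGraph_adj_le hT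
      _ = ∑ _x ∈ T, 2 := sum_congr rfl fun x hx => by rw [hocc x (hsub T hT hx)]
      _ = 6 := by rw [sum_const, h3 T hT, smul_eq_mul]
  obtain ⟨f, hf⟩ := (intersectionGraph α).exists_coloring_on_of_degree_le S hdeg
  refine ⟨f, fun T hT T' hT' hne heq => by_contra fun hnd => ?_⟩
  exact hf T hT T' hT' (by simpa using ⟨hne, hnd⟩) heq
end

section
/- Let E=(C,V) be an election and let q ≥ 0 and t ≥ 0 be integers. Let G be the simple graph on vertex set C in which two distinct candidates c and c' are adjacent exactly if |pos_v(c) − pos_v(c')| ≤ q+1 for every voter v ∈ V (i.e., exactly if {c,c'} is a (q,2)-approximate clone). Then C admits a partition into at most t nonempty parts, each of size at most 2 and each being a (q,2)-approximate clone, if and only if G has a matching M with |C| − |M| ≤ t. -/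
/-! A partition of `C` into clones of size at most two consists of its two-element parts, which
form a matching of the clone graph, and singletons. Conversely a matching `M`, completed by the
singletons of the unmatched candidates, is such a partition. Since the parts are disjoint, a
partition with `k` pairs has `|C| - k` parts, which matches the bound `|C| - |M| ≤ t`. -/

open Finset

section PartitionIntoPairs

variable {C : Type*} [Fintype C] [DecidableEq C]

lemma Finset.card_univ_eq_sum_card_of_cover {P : Finset (Finset C)}
    (hcover : ∀ c, ∃ X ∈ P, c ∈ X) (hdisj : (P : Set (Finset C)).PairwiseDisjoint id) :
    Fintype.card C = ∑ X ∈ P, #X := by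
  have hunion : P.biUnion id = univ := eq_univ_of_forall fun c => by simpa using hcover c
  rw [← card_univ, ← hunion, card_biUnion hdisj]
  rfl

lemma card_sub_card_filter_card_eq_two {P : Finset (Finset C)}
    (hsize : ∀ X ∈ P, X.Nonempty ∧ #X ≤ 2)
    (hcover : ∀ c, ∃ X ∈ P, c ∈ X) (hdisj : (P : Set (Finset C)).PairwiseDisjoint id) :
    Fintype.card C - #{X ∈ P | #X = 2} = #P := by
  have hsum : Fintype.card C = #P + #{X ∈ P | #X = 2} := by
    rw [card_univ_eq_sum_card_of_cover hcover hdisj, card_filter, card_eq_sum_ones,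
      ← sum_add_distrib]
    refine sum_congr rfl fun X hX => ?_
    have := (hsize X hX).1.card_pos
    have := (hsize X hX).2
    split_ifs <;> omega
  omega

def partitionOfMatching (M : Finset (Finset C)) : Finset (Finset C) :=
  M ∪ (M.biUnion id)ᶜ.image singleton

lemma mem_partitionOfMatching {M : Finset (Finset C)} {X : Finset C} :
    X ∈ partitionOfMatching M ↔ X ∈ M ∨ ∃ c ∉ M.biUnion id, X = {c} := by
  simp only [partitionOfMatching, mem_union, mem_image, mem_compl, eq_comm (a := X)]

lemma exists_mem_partitionOfMatching (M : Finset (Finset C)) (c : C) :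
    ∃ X ∈ partitionOfMatching M, c ∈ X := by
  by_cases hc : c ∈ M.biUnion id
  · obtain ⟨e, he, hce⟩ := mem_biUnion.mp hc
    exact ⟨e, mem_union_left _ he, hce⟩
  · exact ⟨{c}, mem_union_right _ (mem_image_of_mem _ (mem_compl.mpr hc)), mem_singleton_self c⟩

lemma pairwiseDisjoint_partitionOfMatching {M : Finset (Finset C)}
    (hM : (M : Set (Finset C)).PairwiseDisjoint id) :
    (partitionOfMatching M : Set (Finset C)).PairwiseDisjoint id := by
  have hsingleton : ∀ e ∈ M, ∀ c ∉ M.biUnion id, Disjoint e {c} := fun e he c hc =>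
    disjoint_singleton_right.mpr fun hce => hc (mem_biUnion.mpr ⟨e, he, hce⟩)
  intro X hX Y hY hXY
  rcases mem_partitionOfMatching.mp hX with hX | ⟨c, hc, rfl⟩ <;>
    rcases mem_partitionOfMatching.mp hY with hY | ⟨c', hc', rfl⟩
  · exact hM hX hY hXY
  · exact hsingleton X hX c' hc'
  · exact (hsingleton Y hY c hc).symm
  · exact disjoint_singleton.mpr fun h => hXY (h ▸ rfl)

lemma card_partitionOfMatching_le {M : Finset (Finset C)} (hM2 : ∀ e ∈ M, #e = 2)
    (hM : (M : Set (Finset C)).PairwiseDisjoint id) :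
    #(partitionOfMatching M) ≤ Fintype.card C - #M := by
  have hcovered : #(M.biUnion id) = 2 * #M := by
    rw [card_biUnion hM]
    change ∑ e ∈ M, #e = _
    rw [sum_congr rfl hM2, sum_const, smul_eq_mul, mul_comm]
  have hle : #(M.biUnion id) ≤ Fintype.card C := card_le_univ _
  calc #(partitionOfMatching M)
      ≤ #M + #((M.biUnion id)ᶜ.image singleton) := card_union_le _ _
    _ ≤ #M + #(M.biUnion id)ᶜ := by gcongr; exact card_image_le
    _ = Fintype.card C - #M := by rw [card_compl]; omega

lemma exists_matching_of_partition {r : C → C → Prop} {t : ℕ} {P : Finset (Finset C)}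
    (hPt : #P ≤ t) (hparts : ∀ X ∈ P, X.Nonempty ∧ #X ≤ 2 ∧ ∀ x ∈ X, ∀ y ∈ X, r x y)
    (hcover : ∀ c : C, ∃ X ∈ P, c ∈ X) (hdisj : ∀ X ∈ P, ∀ Y ∈ P, X ≠ Y → Disjoint X Y) :
    ∃ M : Finset (Finset C),
      (∀ e ∈ M, ∃ c c' : C, c ≠ c' ∧ r c c' ∧ e = {c, c'}) ∧
      (∀ e ∈ M, ∀ e' ∈ M, e ≠ e' → Disjoint e e') ∧
      Fintype.card C - #M ≤ t := by
  refine ⟨{X ∈ P | #X = 2}, fun e he => ?_,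
    fun e he e' he' => hdisj e (mem_filter.mp he).1 e' (mem_filter.mp he').1, ?_⟩
  · obtain ⟨heP, he2⟩ := mem_filter.mp he
    obtain ⟨c, c', hne, rfl⟩ := card_eq_two.mp he2
    exact ⟨c, c', hne, (hparts _ heP).2.2 c (by simp) c' (by simp), rfl⟩
  · rwa [card_sub_card_filter_card_eq_two (fun X hX => ⟨(hparts X hX).1, (hparts X hX).2.1⟩)
      hcover fun X hX Y hY => hdisj X hX Y hY]

lemma exists_partition_of_matching {r : C → C → Prop} (hrefl : ∀ c, r c c)
    (hsymm : ∀ c c', r c c' → r c' c) {t : ℕ} {M : Finset (Finset C)}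
    (hedges : ∀ e ∈ M, ∃ c c' : C, c ≠ c' ∧ r c c' ∧ e = {c, c'})
    (hMdisj : ∀ e ∈ M, ∀ e' ∈ M, e ≠ e' → Disjoint e e') (hMt : Fintype.card C - #M ≤ t) :
    ∃ P : Finset (Finset C), #P ≤ t ∧
      (∀ X ∈ P, X.Nonempty ∧ #X ≤ 2 ∧ ∀ x ∈ X, ∀ y ∈ X, r x y) ∧
      (∀ c : C, ∃ X ∈ P, c ∈ X) ∧
      (∀ X ∈ P, ∀ Y ∈ P, X ≠ Y → Disjoint X Y) := by
  have hM : (M : Set (Finset C)).PairwiseDisjoint id := fun e he e' he' => hMdisj e he e' he'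
  refine ⟨partitionOfMatching M, ?_, fun X hX => ?_, exists_mem_partitionOfMatching M,
    fun X hX Y hY => pairwiseDisjoint_partitionOfMatching hM hX hY⟩
  · refine (card_partitionOfMatching_le (fun e he => ?_) hM).trans hMt
    obtain ⟨c, c', hne, -, rfl⟩ := hedges e he
    exact card_pair hne
  · rcases mem_partitionOfMatching.mp hX with hX | ⟨c, -, rfl⟩
    · obtain ⟨c, c', hne, hcc', rfl⟩ := hedges X hX
      refine ⟨insert_nonempty _ _, (card_pair hne).le, ?_⟩
      simp only [mem_insert, mem_singleton]
      rintro x (rfl | rfl) y (rfl | rfl)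
      exacts [hrefl _, hcc', hsymm _ _ hcc', hrefl _]
    · exact ⟨singleton_nonempty c, by simp, by simp [hrefl]⟩

theorem exists_partition_iff_exists_matching (r : C → C → Prop) (hrefl : ∀ c, r c c)
    (hsymm : ∀ c c', r c c' → r c' c) (t : ℕ) :
    (∃ P : Finset (Finset C), #P ≤ t ∧
        (∀ X ∈ P, X.Nonempty ∧ #X ≤ 2 ∧ ∀ x ∈ X, ∀ y ∈ X, r x y) ∧
        (∀ c : C, ∃ X ∈ P, c ∈ X) ∧
        (∀ X ∈ P, ∀ Y ∈ P, X ≠ Y → Disjoint X Y)) ↔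
      (∃ M : Finset (Finset C),
        (∀ e ∈ M, ∃ c c' : C, c ≠ c' ∧ r c c' ∧ e = {c, c'}) ∧
        (∀ e ∈ M, ∀ e' ∈ M, e ≠ e' → Disjoint e e') ∧
        Fintype.card C - #M ≤ t) :=
  ⟨fun ⟨_, hPt, hparts, hcover, hdisj⟩ => exists_matching_of_partition hPt hparts hcover hdisj,
    fun ⟨_, hedges, hMdisj, hMt⟩ => exists_partition_of_matching hrefl hsymm hedges hMdisj hMt⟩

end PartitionIntoPairs

theorem stmt_2_general {C V : Type*} [Fintype C] [DecidableEq C]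
    (pos : V → C → ℕ)
    (q t : ℕ) :
    (∃ P : Finset (Finset C), P.card ≤ t ∧
        (∀ X ∈ P, X.Nonempty ∧ X.card ≤ 2 ∧
          ∀ v : V, ∀ x ∈ X, ∀ y ∈ X, |(pos v x : ℤ) - (pos v y : ℤ)| ≤ (q : ℤ) + 1) ∧
        (∀ c : C, ∃ X ∈ P, c ∈ X) ∧
        (∀ X ∈ P, ∀ Y ∈ P, X ≠ Y → Disjoint X Y)) ↔
      (∃ M : Finset (Finset C),
        (∀ e ∈ M, ∃ c c' : C, c ≠ c' ∧
            (∀ v : V, |(pos v c : ℤ) - (pos v c' : ℤ)| ≤ (q : ℤ) + 1) ∧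
            e = {c, c'}) ∧
        (∀ e ∈ M, ∀ e' ∈ M, e ≠ e' → Disjoint e e') ∧
        Fintype.card C - M.card ≤ t) := by
  have hclone := exists_partition_iff_exists_matching
    (fun c c' => ∀ v, |(pos v c : ℤ) - (pos v c' : ℤ)| ≤ (q : ℤ) + 1)
    (fun c v => by simp only [sub_self, abs_zero]; positivity)
    (fun c c' h v => abs_sub_comm (pos v c : ℤ) _ ▸ h v) t
  simpa only [forall_comm (α := V)] using hclone

/-- In an election `(C, V)` (each voter `v` has a bijective position function
`pos v : C → {1,…,m}`), for integers `q ≥ 0` and `t ≥ 0`: the candidate set admits a partition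
into at most `t` nonempty parts, each of size at most 2 and each a `(q,2)`-approximate clone,
iff the graph on `C` whose edges are exactly the `(q,2)`-approximate clone pairs
(i.e. `c ≠ c'` with `|pos_v c − pos_v c'| ≤ q+1` for every voter `v`) has a matching `M`
(a set of pairwise disjoint edges) with `|C| − |M| ≤ t`. -/
theorem stmt_2 {C V : Type*} [Fintype C] [DecidableEq C]
    (pos : V → C → ℕ)
    (hpos : ∀ v : V, Set.BijOn (pos v) Set.univ (Set.Icc 1 (Fintype.card C)))
    (q t : ℕ) :
    (∃ P : Finset (Finset C), P.card ≤ t ∧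
        (∀ X ∈ P, X.Nonempty ∧ X.card ≤ 2 ∧
          ∀ v : V, ∀ x ∈ X, ∀ y ∈ X, |(pos v x : ℤ) - (pos v y : ℤ)| ≤ (q : ℤ) + 1) ∧
        (∀ c : C, ∃ X ∈ P, c ∈ X) ∧
        (∀ X ∈ P, ∀ Y ∈ P, X ≠ Y → Disjoint X Y)) ↔
      (∃ M : Finset (Finset C),
        (∀ e ∈ M, ∃ c c' : C, c ≠ c' ∧
            (∀ v : V, |(pos v c : ℤ) - (pos v c' : ℤ)| ≤ (q : ℤ) + 1) ∧
            e = {c, c'}) ∧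
        (∀ e ∈ M, ∀ e' ∈ M, e ≠ e' → Disjoint e e') ∧
        Fintype.card C - M.card ≤ t) :=
  stmt_2_general pos q t
end

section
/- Let G=(U,F) be a simple graph with U={u_1,…,u_r} and let k be an integer with 3 ≤ k ≤ r. Let E=(C,V) be any election with candidate set C = U ∪ {d_1,d_2} (where d_1,d_2 ∉ U) and the following voters: for each i ∈ {1,…,r}, a voter v_i with pos_{v_i}(d_1)=1, pos_{v_i}(d_2)=2, pos_{v_i}(u_i)=r+2, and the candidates of U∖{u_i} placed on positions 3,…,r+1 in an arbitrary order; and for each edge f ∈ F, writing its endpoints as u_i and u_j under an arbitrary fixed choice of order, a voter w_f with pos_{w_f}(d_2)=1, pos_{w_f}(u_i)=2, pos_{w_f}(d_1)=3, pos_{w_f}(u_j)=r+2, and the candidates of U∖{u_i,u_j} placed on positions 4,…,r+1 in an arbitrary order. Then there exists a set Q ⊆ C with |Q| = k such that max_{x∈Q} pos_v(x) − min_{x∈Q} pos_v(x) ≤ r−1 for every voter v of E (i.e., Q is a (q,b)-approximate clone of size exactly b for b = k and q = r−k) if and only if G has an independent set of size k. -/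
/-!
If a clone `Q` of size `k ≥ 3` contains some vertex candidate `u_a`, the voter `v_a` ranks `u_a`
last and `d₁, d₂` first, so `Q` contains no dummy and consists of `k` vertices; the voter of an
edge `u_i u_j` places its endpoints at distance `r`, so `Q` is independent. Conversely a set of
`k` independent vertices avoids the top two positions of every vertex voter, and for an edge voter
it avoids either the second position `u_i` or the last position `u_j`; in both cases the
positions it occupies lie in a window of `r` consecutive places.
-/

open Function Finset

section Spread

variable {α : Type*} {p : α → ℕ} {Q : Finset α}

def SpreadLE (p : α → ℕ) (Q : Finset α) (q : ℤ) : Prop :=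
  ∀ x ∈ Q, ∀ y ∈ Q, (p x : ℤ) - p y ≤ q

theorem SpreadLE.notMem_of_lt_sub {q : ℤ} (hQ : SpreadLE p Q q) {x y : α} (hx : x ∈ Q)
    (hxy : q < (p x : ℤ) - p y) : y ∉ Q :=
  fun hy => (hQ x hx y hy).not_gt hxy

variable {r : ℕ} {a b : α}

theorem spreadLE_of_notMem_first_two (hp : Injective p) (hrange : ∀ x, p x ∈ Set.Icc 1 (r + 2))
    (ha : p a = 1) (hb : p b = 2) (haQ : a ∉ Q) (hbQ : b ∉ Q) : SpreadLE p Q (r - 1) := by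
  intro x _ y hy
  have hya := hp.ne (ne_of_mem_of_not_mem hy haQ)
  have hyb := hp.ne (ne_of_mem_of_not_mem hy hbQ)
  have hx := hrange x
  have hy := hrange y
  simp only [Set.mem_Icc] at hx hy
  omega

theorem spreadLE_of_notMem_first_last (hp : Injective p) (hrange : ∀ x, p x ∈ Set.Icc 1 (r + 2))
    (ha : p a = 1) (hb : p b = r + 2) (haQ : a ∉ Q) (hbQ : b ∉ Q) : SpreadLE p Q (r - 1) := by
  intro x hx y hy
  have hxb := hp.ne (ne_of_mem_of_not_mem hx hbQ)
  have hya := hp.ne (ne_of_mem_of_not_mem hy haQ)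
  have hx := hrange x
  have hy := hrange y
  simp only [Set.mem_Icc] at hx hy
  omega

end Spread

namespace Finset

variable {β γ : Type*} {u : Finset (β ⊕ γ)}

theorem exists_inl_mem_of_card_lt [Fintype γ] (h : Fintype.card γ < #u) :
    ∃ b, Sum.inl b ∈ u := by
  by_contra! hu
  have hleft : u.toLeft = ∅ := eq_empty_of_forall_notMem fun b => by simpa using hu b
  have := card_toLeft_add_card_toRight (u := u)
  have := card_le_univ u.toRight
  rw [hleft, card_empty] at *
  omega

theorem card_toLeft_of_forall_inr_notMem (hu : ∀ c, Sum.inr c ∉ u) : #u.toLeft = #u := by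
  have hright : u.toRight = ∅ := eq_empty_of_forall_notMem fun c => by simpa using hu c
  simpa [hright] using card_toLeft_add_card_toRight (u := u)

end Finset

theorem stmt_4_general {r : ℕ} (G : SimpleGraph (Fin r)) (k : ℕ) (hk3 : 3 ≤ k)
    (pos : (Fin r ⊕ ↥G.edgeSet) → (Fin r ⊕ Fin 2) → ℕ)
    (hbij : ∀ v, Set.BijOn (pos v) Set.univ (Set.Icc 1 (r + 2)))
    (hv : ∀ i : Fin r,
      pos (Sum.inl i) (Sum.inr 0) = 1 ∧
      pos (Sum.inl i) (Sum.inr 1) = 2 ∧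
      pos (Sum.inl i) (Sum.inl i) = r + 2)
    (hw : ∀ f : ↥G.edgeSet, ∃ i j : Fin r, G.Adj i j ∧ (f : Sym2 (Fin r)) = s(i, j) ∧
      pos (Sum.inr f) (Sum.inr 1) = 1 ∧
      pos (Sum.inr f) (Sum.inl i) = 2 ∧
      pos (Sum.inr f) (Sum.inr 0) = 3 ∧
      pos (Sum.inr f) (Sum.inl j) = r + 2) :
    (∃ Q : Finset (Fin r ⊕ Fin 2), Q.card = k ∧
        ∀ v : Fin r ⊕ ↥G.edgeSet, ∀ x ∈ Q, ∀ y ∈ Q,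
          (pos v x : ℤ) - (pos v y : ℤ) ≤ (r : ℤ) - 1) ↔
      (∃ I : Finset (Fin r), I.card = k ∧ ∀ i ∈ I, ∀ j ∈ I, ¬ G.Adj i j) := by
  have hp v : Injective (pos v) := Set.injOn_univ.mp (hbij v).injOn
  have hrange v x : pos v x ∈ Set.Icc 1 (r + 2) := (hbij v).mapsTo (Set.mem_univ x)
  constructor
  · rintro ⟨Q, hQcard, hQ⟩
    obtain ⟨a, ha⟩ := exists_inl_mem_of_card_lt (u := Q) (by rw [Fintype.card_fin]; omega)
    have hdummy c : Sum.inr c ∉ Q := by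
      obtain ⟨h1, h2, hlast⟩ := hv a
      refine SpreadLE.notMem_of_lt_sub (hQ (Sum.inl a)) ha ?_
      fin_cases c <;> simp [h1, h2, hlast]
    refine ⟨Q.toLeft, (card_toLeft_of_forall_inr_notMem hdummy).trans hQcard,
      fun i hi j hj hij => ?_⟩
    obtain ⟨i', j', -, hf, -, hi', -, hj'⟩ := hw ⟨s(i, j), hij⟩
    have hendpoint l (hl : l ∈ s(i', j')) : Sum.inl l ∈ Q := by
      rw [← hf, Sym2.mem_iff] at hl
      rcases hl with rfl | rfl
      exacts [mem_toLeft.mp hi, mem_toLeft.mp hj]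
    refine SpreadLE.notMem_of_lt_sub (hQ (Sum.inr ⟨s(i, j), hij⟩))
      (hendpoint j' (Sym2.mem_mk_right _ _)) ?_ (hendpoint i' (Sym2.mem_mk_left _ _))
    simp [hi', hj']
  · rintro ⟨I, hIcard, hI⟩
    refine ⟨I.map Embedding.inl, by simpa using hIcard, ?_⟩
    rintro (i | f)
    · obtain ⟨h1, h2, -⟩ := hv i
      exact spreadLE_of_notMem_first_two (hp _) (hrange _) h1 h2 (by simp) (by simp)
    obtain ⟨i, j, hij, -, h1, hi, -, hj⟩ := hw f
    by_cases hjI : j ∈ I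
    · exact spreadLE_of_notMem_first_two (hp _) (hrange _) h1 hi (by simp)
        (by simpa using fun hiI => hI i hiI j hjI hij)
    · exact spreadLE_of_notMem_first_last (hp _) (hrange _) h1 hj (by simp) (by simpa using hjI)

/-- Let `G` be a simple graph on `U = {u_1,…,u_r}` (modelled as `Fin r`) and
`3 ≤ k ≤ r`. Consider any election whose candidates are `U ∪ {d₁, d₂}` (candidate type
`Fin r ⊕ Fin 2`, with `d₁ = Sum.inr 0`, `d₂ = Sum.inr 1`) and whose voters are exactly:
a voter `v_i` for each vertex `u_i` with `d₁` on position 1, `d₂` on position 2, `u_i` on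
position `r+2` (the other candidates filling positions 3,…,r+1 arbitrarily, which is forced
by bijectivity); and a voter `w_f` for each edge `f`, with endpoints written as `u_i, u_j`
(arbitrary fixed order), having `d₂` on position 1, `u_i` on position 2, `d₁` on position 3,
`u_j` on position `r+2` (the rest on positions 4,…,r+1 arbitrarily). Then there is a set
`Q ⊆ C` with `|Q| = k` such that every voter's positions on `Q` have spread at most `r−1`
(i.e. `Q` is a `(q,b)`-approximate clone of size exactly `b` for `b = k`, `q = r−k`) iff `G`
has an independent set of size `k`. -/
theorem stmt_4 {r : ℕ} (G : SimpleGraph (Fin r)) (k : ℕ) (hk3 : 3 ≤ k) (hkr : k ≤ r)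
    (pos : (Fin r ⊕ ↥G.edgeSet) → (Fin r ⊕ Fin 2) → ℕ)
    (hbij : ∀ v, Set.BijOn (pos v) Set.univ (Set.Icc 1 (r + 2)))
    (hv : ∀ i : Fin r,
      pos (Sum.inl i) (Sum.inr 0) = 1 ∧
      pos (Sum.inl i) (Sum.inr 1) = 2 ∧
      pos (Sum.inl i) (Sum.inl i) = r + 2)
    (hw : ∀ f : ↥G.edgeSet, ∃ i j : Fin r, G.Adj i j ∧ (f : Sym2 (Fin r)) = s(i, j) ∧
      pos (Sum.inr f) (Sum.inr 1) = 1 ∧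
      pos (Sum.inr f) (Sum.inl i) = 2 ∧
      pos (Sum.inr f) (Sum.inr 0) = 3 ∧
      pos (Sum.inr f) (Sum.inl j) = r + 2) :
    (∃ Q : Finset (Fin r ⊕ Fin 2), Q.card = k ∧
        ∀ v : Fin r ⊕ ↥G.edgeSet, ∀ x ∈ Q, ∀ y ∈ Q,
          (pos v x : ℤ) - (pos v y : ℤ) ≤ (r : ℤ) - 1) ↔
      (∃ I : Finset (Fin r), I.card = k ∧ ∀ i ∈ I, ∀ j ∈ I, ¬ G.Adj i j) :=
  stmt_4_general G k hk3 pos hbij hv hw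
end

section
/- Let G=(U,F) be a simple graph with U={u_1,…,u_r}, let k ≥ 1 and b ≥ 1 be integers with r = k·b, and set q = r − b. Let D = {d_1,…,d_b} be a set of b dummy candidates disjoint from U, and let E=(C,V) be any election with candidate set C = U ∪ D and the following voters: for each i ∈ {1,…,b} and j ∈ {1,…,r}, a voter v_{i,j} with pos(d_i)=1, the candidates of D∖{d_i} on positions 2,…,b in an arbitrary order, the candidates of U∖{u_j} on positions b+1,…,b+r−1 in an arbitrary order, and pos(u_j)=b+r; and for each edge f ∈ F, writing its endpoints as u_i and u_j under an arbitrary fixed choice of order, a voter w_f with the candidates of D∖{d_1} on positions 1,…,b−1 in an arbitrary order, pos(u_i)=b, pos(d_1)=b+1, the candidates of U∖{u_i,u_j} on positions b+2,…,b+r−1 in an arbitrary order, and pos(u_j)=b+r. Then C admits a partition into at most k+1 nonempty parts, each of which is a (q,b)-approximate clone, if and only if U can be partitioned into k independent sets of G, each of size exactly b. -/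
/-!
The voter `v_{i,j}` ranks `d_i` first and `u_j` last, so no approximate clone mixes dummies with
vertices, and the voter `w_f` ranks the two ends of `f` at distance `r`, so every clone of vertices
is independent. The `k * b` vertices then need at least `k` clones of size at most `b` and the
dummies at least one more, so there are exactly `k` clones of vertices, each of size exactly `b`.
Conversely, the dummies and the `k` colour classes form such a partition: every voter ranks each of
these parts inside a window of `r` consecutive positions (for the dummies under `w_f` this needs
`k ≥ 2`, which holds as soon as `G` has an edge).
-/

open Finset

theorem exists_fin_relabel_of_card_fiber_le {α β : Type*} [Fintype α] [DecidableEq β] {k b : ℕ}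
    (hb : 0 < b) (f : α → β) (hα : Fintype.card α = k * b) (himage : #(univ.image f) ≤ k)
    (hfiber : ∀ a, #{a' | f a' = f a} ≤ b) :
    ∃ g : α → Fin k, (∀ c, #{a | g a = c} = b) ∧ ∀ a a', g a = g a' → f a = f a' := by
  set s := univ.image f
  have hfiber' : ∀ y ∈ s, #{a | f a = y} ≤ b := by
    intro y hy
    obtain ⟨a, -, rfl⟩ := mem_image.1 hy
    exact hfiber a
  have hsum : ∑ y ∈ s, #{a | f a = y} = k * b := by
    rw [← hα, ← card_univ, card_eq_sum_card_image f univ]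
  have hsum_le : ∑ y ∈ s, #{a | f a = y} ≤ #s * b := by
    simpa using sum_le_card_nsmul s _ b hfiber'
  have hs : #s = k := le_antisymm himage (Nat.le_of_mul_le_mul_right (hsum ▸ hsum_le) hb)
  have hfiber_eq : ∀ y ∈ s, #{a | f a = y} = b := by
    refine (sum_eq_sum_iff_of_le hfiber').1 ?_
    rw [hsum, sum_const, hs, smul_eq_mul]
  let e : s ≃ Fin k := s.equivFin.trans (finCongr hs)
  refine ⟨fun a => e ⟨f a, mem_image_of_mem f (mem_univ a)⟩, fun c => ?_,
    fun a a' h => congrArg Subtype.val (e.injective h)⟩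
  rw [← hfiber_eq _ (e.symm c).2]
  congr 1
  refine filter_congr fun a _ => ?_
  rw [← e.eq_symm_apply, Subtype.ext_iff]

theorem exists_partition_into_fibers {α β : Type*} [Fintype α] [DecidableEq α] [Fintype β]
    [DecidableEq β] (f : α → β) :
    ∃ P : Finset (Finset α), #P ≤ Fintype.card β ∧
      (∀ X ∈ P, ∃ a, X = ({a' | f a' = f a} : Finset α)) ∧ (∀ a, ∃ X ∈ P, a ∈ X) ∧
      ∀ X ∈ P, ∀ Y ∈ P, X ≠ Y → Disjoint X Y := by
  refine ⟨(univ.image f).image fun y => ({a | f a = y} : Finset α), ?_, ?_, ?_, ?_⟩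
  · exact card_image_le.trans (card_le_univ _)
  · simp only [mem_image, mem_univ, true_and]
    rintro X ⟨_, ⟨a, rfl⟩, rfl⟩
    exact ⟨a, rfl⟩
  · intro a
    exact ⟨({a' | f a' = f a} : Finset α),
      mem_image_of_mem _ (mem_image_of_mem f (mem_univ a)), by simp⟩
  · simp only [mem_image, mem_univ, true_and]
    rintro _ ⟨_, ⟨a, rfl⟩, rfl⟩ _ ⟨_, ⟨a', rfl⟩, rfl⟩ hne
    refine disjoint_filter.2 fun x _ hx hx' => hne ?_
    rw [← hx, ← hx']

section ApproxClone

variable {V C : Type*}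

def IsApproxClone (pos : V → C → ℕ) (q b : ℕ) (X : Finset C) : Prop :=
  X.Nonempty ∧ #X ≤ b ∧
    ∀ v, ∀ x ∈ X, ∀ y ∈ X, (pos v x : ℤ) - (pos v y : ℤ) ≤ (q : ℤ) + (b : ℤ) - 1

theorem isApproxClone_of_mem_Ico {pos : V → C → ℕ} {q b : ℕ} {X : Finset C} (hne : X.Nonempty)
    (hcard : #X ≤ b) (hwindow : ∀ v, ∃ lo, ∀ x ∈ X, pos v x ∈ Set.Ico lo (lo + q + b)) :
    IsApproxClone pos q b X := by
  refine ⟨hne, hcard, fun v x hx y hy => ?_⟩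
  obtain ⟨lo, hlo⟩ := hwindow v
  obtain ⟨hx_lo, hx_hi⟩ := hlo x hx
  obtain ⟨hy_lo, hy_hi⟩ := hlo y hy
  omega

end ApproxClone

structure IsReductionElection {r b : ℕ} (hb : 1 ≤ b) (G : SimpleGraph (Fin r))
    (pos : ((Fin b × Fin r) ⊕ ↥G.edgeSet) → (Fin r ⊕ Fin b) → ℕ) : Prop where
  pos_v : ∀ (i : Fin b) (j : Fin r),
    pos (Sum.inl (i, j)) (Sum.inr i) = 1 ∧
    pos (Sum.inl (i, j)) (Sum.inl j) = b + r ∧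
    (∀ i' : Fin b, i' ≠ i →
      pos (Sum.inl (i, j)) (Sum.inr i') ∈ Set.Icc 2 b) ∧
    (∀ j' : Fin r, j' ≠ j →
      pos (Sum.inl (i, j)) (Sum.inl j') ∈ Set.Icc (b + 1) (b + r - 1))
  pos_w : ∀ f : ↥G.edgeSet, ∃ i j : Fin r, G.Adj i j ∧ (f : Sym2 (Fin r)) = s(i, j) ∧
    (∀ i' : Fin b, i' ≠ ⟨0, hb⟩ →
      pos (Sum.inr f) (Sum.inr i') ∈ Set.Icc 1 (b - 1)) ∧
    pos (Sum.inr f) (Sum.inl i) = b ∧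
    pos (Sum.inr f) (Sum.inr ⟨0, hb⟩) = b + 1 ∧
    (∀ j' : Fin r, j' ≠ i → j' ≠ j →
      pos (Sum.inr f) (Sum.inl j') ∈ Set.Icc (b + 2) (b + r - 1)) ∧
    pos (Sum.inr f) (Sum.inl j) = b + r

namespace IsReductionElection

variable {r b : ℕ} {hb : 1 ≤ b} {G : SimpleGraph (Fin r)}
  {pos : ((Fin b × Fin r) ⊕ ↥G.edgeSet) → (Fin r ⊕ Fin b) → ℕ} (E : IsReductionElection hb G pos)
include E

theorem inl_notMem_of_inr_mem {X : Finset (Fin r ⊕ Fin b)} (hX : IsApproxClone pos (r - b) b X)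
    {d : Fin b} (hd : Sum.inr d ∈ X) (u : Fin r) : Sum.inl u ∉ X := by
  intro hu
  have hspread := hX.2.2 (Sum.inl (d, u)) _ hu _ hd
  obtain ⟨hd_pos, hu_pos, -⟩ := E.pos_v d u
  rw [hd_pos, hu_pos] at hspread
  have := d.pos
  have := u.pos
  omega

theorem not_adj_of_inl_mem {X : Finset (Fin r ⊕ Fin b)} (hbr : b ≤ r)
    (hX : IsApproxClone pos (r - b) b X) {i j : Fin r} (hi : Sum.inl i ∈ X) (hj : Sum.inl j ∈ X) :
    ¬ G.Adj i j := by
  intro hadj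
  obtain ⟨i', j', -, hf, -, hi'_pos, -, -, hj'_pos⟩ := E.pos_w ⟨s(i, j), hadj⟩
  have hends : Sum.inl i' ∈ X ∧ Sum.inl j' ∈ X := by
    rcases Sym2.eq_iff.1 hf with ⟨rfl, rfl⟩ | ⟨rfl, rfl⟩
    exacts [⟨hi, hj⟩, ⟨hj, hi⟩]
  have hspread := hX.2.2 (Sum.inr ⟨s(i, j), hadj⟩) _ hends.2 _ hends.1
  rw [hi'_pos, hj'_pos] at hspread
  omega

theorem isApproxClone_map_inl (hbr : b ≤ r) {S : Finset (Fin r)} (hne : S.Nonempty)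
    (hcard : #S ≤ b) (hS : ∀ i ∈ S, ∀ j ∈ S, ¬ G.Adj i j) :
    IsApproxClone pos (r - b) b (S.map .inl) := by
  refine isApproxClone_of_mem_Ico hne.map (by rwa [card_map]) ?_
  simp only [mem_map, Function.Embedding.inl_apply, forall_exists_index, and_imp,
    forall_apply_eq_imp_iff₂]
  rintro (⟨i, j⟩ | f)
  · obtain ⟨-, hj_pos, -, hrest⟩ := E.pos_v i j
    refine ⟨b + 1, fun u _ => ?_⟩
    rcases eq_or_ne u j with rfl | hu
    · rw [hj_pos, Set.mem_Ico]; omega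
    · have := hrest u hu
      simp only [Set.mem_Icc, Set.mem_Ico] at this ⊢; omega
  · obtain ⟨i, j, hadj, -, -, hi_pos, -, hrest, hj_pos⟩ := E.pos_w f
    -- `w_f` ranks `u_i` at `b` and `u_j` last, and `S` contains at most one of them.
    by_cases hiS : i ∈ S
    · have hjS : j ∉ S := fun hjS => hS i hiS j hjS hadj
      refine ⟨b, fun u hu => ?_⟩
      rcases eq_or_ne u i with rfl | hui
      · rw [hi_pos, Set.mem_Ico]; omega
      · have := hrest u hui (ne_of_mem_of_not_mem hu hjS)
        simp only [Set.mem_Icc, Set.mem_Ico] at this ⊢; omega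
    · refine ⟨b + 1, fun u hu => ?_⟩
      rcases eq_or_ne u j with rfl | huj
      · rw [hj_pos, Set.mem_Ico]; omega
      · have := hrest u (ne_of_mem_of_not_mem hu hiS) huj
        simp only [Set.mem_Icc, Set.mem_Ico] at this ⊢; omega

theorem isApproxClone_univ_map_inr (hlt : ∀ i j, G.Adj i j → b < r) :
    IsApproxClone pos (r - b) b (univ.map .inr) := by
  refine isApproxClone_of_mem_Ico ⟨_, mem_map_of_mem _ (mem_univ ⟨0, hb⟩)⟩
    (by simp) ?_
  simp only [mem_map, mem_univ, true_and, Function.Embedding.inr_apply, forall_exists_index,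
    forall_apply_eq_imp_iff]
  rintro (⟨i, j⟩ | f)
  · obtain ⟨hi_pos, -, hrest, -⟩ := E.pos_v i j
    refine ⟨1, fun d => ?_⟩
    rcases eq_or_ne d i with rfl | hd
    · rw [hi_pos, Set.mem_Ico]; omega
    · have := hrest d hd
      simp only [Set.mem_Icc, Set.mem_Ico] at this ⊢; omega
  · obtain ⟨i, j, hadj, -, hrest, -, hd_pos, -⟩ := E.pos_w f
    have := hlt i j hadj
    refine ⟨1, fun d => ?_⟩
    rcases eq_or_ne d ⟨0, hb⟩ with rfl | hd
    · rw [hd_pos, Set.mem_Ico]; omega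
    · have := hrest d hd
      simp only [Set.mem_Icc, Set.mem_Ico] at this ⊢; omega

theorem exists_coloring_of_partition {k : ℕ} (hr : r = k * b) (hbr : b ≤ r)
    {P : Finset (Finset (Fin r ⊕ Fin b))} (hPcard : #P ≤ k + 1)
    (hclone : ∀ X ∈ P, IsApproxClone pos (r - b) b X) (hcover : ∀ c, ∃ X ∈ P, c ∈ X) :
    ∃ g : Fin r → Fin k,
      (∀ c : Fin k, #{j | g j = c} = b) ∧ ∀ i j : Fin r, g i = g j → ¬ G.Adj i j := by
  choose part hpart_mem hmem_part using hcover
  have hpure (j : Fin r) : part (.inl j) ≠ part (.inr ⟨0, hb⟩) := fun h =>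
    E.inl_notMem_of_inr_mem (hclone _ (hpart_mem _)) (hmem_part _) j (h ▸ hmem_part _)
  have himage : #(univ.image fun j => part (.inl j)) ≤ k := by
    have hsub : univ.image (fun j => part (.inl j)) ⊆ P.erase (part (.inr ⟨0, hb⟩)) := by
      simp only [subset_iff, mem_image, mem_univ, true_and, mem_erase]
      rintro _ ⟨j, rfl⟩
      exact ⟨hpure j, hpart_mem _⟩
    have := card_le_card hsub
    rw [card_erase_of_mem (hpart_mem _)] at this
    omega
  have hfiber (j : Fin r) : #{j' | part (.inl j') = part (.inl j)} ≤ b := by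
    refine (card_le_card_of_injOn Sum.inl (fun j' hj' => ?_) Sum.inl_injective.injOn).trans
      (hclone _ (hpart_mem (.inl j))).2.1
    exact (mem_filter.1 hj').2 ▸ hmem_part _
  obtain ⟨g, hg_card, hg_part⟩ :=
    exists_fin_relabel_of_card_fiber_le hb _ (by simpa using hr) himage hfiber
  refine ⟨g, hg_card, fun i j hij => E.not_adj_of_inl_mem hbr (hclone _ (hpart_mem (.inl i)))
    (hmem_part _) ?_⟩
  exact hg_part i j hij ▸ hmem_part _

theorem exists_partition_of_coloring {k : ℕ} (hr : r = k * b) (hbr : b ≤ r) {g : Fin r → Fin k}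
    (hg_card : ∀ c : Fin k, #{j | g j = c} = b)
    (hg_indep : ∀ i j : Fin r, g i = g j → ¬ G.Adj i j) :
    ∃ P : Finset (Finset (Fin r ⊕ Fin b)), #P ≤ k + 1 ∧
      (∀ X ∈ P, IsApproxClone pos (r - b) b X) ∧ (∀ c, ∃ X ∈ P, c ∈ X) ∧
      ∀ X ∈ P, ∀ Y ∈ P, X ≠ Y → Disjoint X Y := by
  obtain ⟨P, hPcard, hfibers, hcover, hdisj⟩ :=
    exists_partition_into_fibers fun x : Fin r ⊕ Fin b => x.getLeft?.map g
  refine ⟨P, by simpa using hPcard, fun X hX => ?_, hcover, hdisj⟩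
  obtain ⟨c | d, rfl⟩ := hfibers X hX
  · have hclass : ({x | x.getLeft?.map g = (Sum.inl c : Fin r ⊕ Fin b).getLeft?.map g} :
        Finset (Fin r ⊕ Fin b)) = ({j | g j = g c} : Finset (Fin r)).map .inl := by
      ext (_ | _) <;> simp
    rw [hclass]
    refine E.isApproxClone_map_inl hbr ⟨c, by simp⟩ (hg_card _).le fun i hi j hj => ?_
    simp only [mem_filter, mem_univ, true_and] at hi hj
    exact hg_indep i j (hi.trans hj.symm)
  · have hdummies : ({x | x.getLeft?.map g = (Sum.inr d : Fin r ⊕ Fin b).getLeft?.map g} :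
        Finset (Fin r ⊕ Fin b)) = univ.map .inr := by
      ext (_ | _) <;> simp
    rw [hdummies]
    refine E.isApproxClone_univ_map_inr fun i j hadj => ?_
    have hk : 2 ≤ k := by
      have := Fin.val_ne_of_ne (fun h => hg_indep i j h hadj)
      omega
    calc b < 2 * b := by omega
      _ ≤ k * b := Nat.mul_le_mul_right b hk
      _ = r := hr.symm

end IsReductionElection

theorem stmt_5_general {r k b : ℕ} (hk : 1 ≤ k) (hb : 1 ≤ b) (hr : r = k * b)
    (G : SimpleGraph (Fin r))
    (pos : ((Fin b × Fin r) ⊕ ↥G.edgeSet) → (Fin r ⊕ Fin b) → ℕ)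
    (hv : ∀ (i : Fin b) (j : Fin r),
      pos (Sum.inl (i, j)) (Sum.inr i) = 1 ∧
      pos (Sum.inl (i, j)) (Sum.inl j) = b + r ∧
      (∀ i' : Fin b, i' ≠ i →
        pos (Sum.inl (i, j)) (Sum.inr i') ∈ Set.Icc 2 b) ∧
      (∀ j' : Fin r, j' ≠ j →
        pos (Sum.inl (i, j)) (Sum.inl j') ∈ Set.Icc (b + 1) (b + r - 1)))
    (hw : ∀ f : ↥G.edgeSet, ∃ i j : Fin r, G.Adj i j ∧ (f : Sym2 (Fin r)) = s(i, j) ∧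
      (∀ i' : Fin b, i' ≠ ⟨0, hb⟩ →
        pos (Sum.inr f) (Sum.inr i') ∈ Set.Icc 1 (b - 1)) ∧
      pos (Sum.inr f) (Sum.inl i) = b ∧
      pos (Sum.inr f) (Sum.inr ⟨0, hb⟩) = b + 1 ∧
      (∀ j' : Fin r, j' ≠ i → j' ≠ j →
        pos (Sum.inr f) (Sum.inl j') ∈ Set.Icc (b + 2) (b + r - 1)) ∧
      pos (Sum.inr f) (Sum.inl j) = b + r) :
    (∃ P : Finset (Finset (Fin r ⊕ Fin b)), P.card ≤ k + 1 ∧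
        (∀ X ∈ P, X.Nonempty ∧ X.card ≤ b ∧
          ∀ v, ∀ x ∈ X, ∀ y ∈ X,
            (pos v x : ℤ) - (pos v y : ℤ) ≤ ((r - b : ℕ) : ℤ) + (b : ℤ) - 1) ∧
        (∀ c, ∃ X ∈ P, c ∈ X) ∧
        (∀ X ∈ P, ∀ Y ∈ P, X ≠ Y → Disjoint X Y)) ↔
      (∃ g : Fin r → Fin k,
        (∀ c : Fin k, (Finset.univ.filter (fun j => g j = c)).card = b) ∧
        (∀ i j : Fin r, g i = g j → ¬ G.Adj i j)) := by
  have E : IsReductionElection hb G pos := ⟨hv, hw⟩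
  have hbr : b ≤ r := hr ▸ Nat.le_mul_of_pos_left b hk
  constructor
  · rintro ⟨P, hPcard, hclone, hcover, -⟩
    exact E.exists_coloring_of_partition hr hbr hPcard hclone hcover
  · rintro ⟨g, hg_card, hg_indep⟩
    exact E.exists_partition_of_coloring hr hbr hg_card hg_indep

/-- Let `G` be a simple graph on `U = {u_1,…,u_r}` (modelled as `Fin r`),
let `k ≥ 1`, `b ≥ 1` with `r = k·b`, and set `q = r − b`. Consider any election whose
candidates are `U ∪ D` with `D = {d_1,…,d_b}` (candidate type `Fin r ⊕ Fin b`) and whose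
voters are exactly: for each `i ∈ [b]`, `j ∈ [r]` a voter `v_{i,j}` with `d_i` on position 1,
the rest of `D` on positions 2,…,b, the rest of `U` on positions b+1,…,b+r−1, and `u_j` on
position `b+r`; and for each edge `f` (endpoints written `u_i, u_j` in an arbitrary fixed
order) a voter `w_f` with `D∖{d_1}` on positions 1,…,b−1, `u_i` on position `b`, `d_1` on
position `b+1`, `U∖{u_i,u_j}` on positions b+2,…,b+r−1, and `u_j` on position `b+r`.
Then `C` admits a partition into at most `k+1` nonempty parts, each a `(q,b)`-approximate
clone, iff `U` can be partitioned into `k` independent sets of `G`, each of size exactly `b`. -/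
theorem stmt_5 {r k b : ℕ} (hk : 1 ≤ k) (hb : 1 ≤ b) (hr : r = k * b)
    (G : SimpleGraph (Fin r))
    (pos : ((Fin b × Fin r) ⊕ ↥G.edgeSet) → (Fin r ⊕ Fin b) → ℕ)
    (hbij : ∀ v, Set.BijOn (pos v) Set.univ (Set.Icc 1 (b + r)))
    (hv : ∀ (i : Fin b) (j : Fin r),
      pos (Sum.inl (i, j)) (Sum.inr i) = 1 ∧
      pos (Sum.inl (i, j)) (Sum.inl j) = b + r ∧
      (∀ i' : Fin b, i' ≠ i →
        pos (Sum.inl (i, j)) (Sum.inr i') ∈ Set.Icc 2 b) ∧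
      (∀ j' : Fin r, j' ≠ j →
        pos (Sum.inl (i, j)) (Sum.inl j') ∈ Set.Icc (b + 1) (b + r - 1)))
    (hw : ∀ f : ↥G.edgeSet, ∃ i j : Fin r, G.Adj i j ∧ (f : Sym2 (Fin r)) = s(i, j) ∧
      (∀ i' : Fin b, i' ≠ ⟨0, hb⟩ →
        pos (Sum.inr f) (Sum.inr i') ∈ Set.Icc 1 (b - 1)) ∧
      pos (Sum.inr f) (Sum.inl i) = b ∧
      pos (Sum.inr f) (Sum.inr ⟨0, hb⟩) = b + 1 ∧
      (∀ j' : Fin r, j' ≠ i → j' ≠ j →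
        pos (Sum.inr f) (Sum.inl j') ∈ Set.Icc (b + 2) (b + r - 1)) ∧
      pos (Sum.inr f) (Sum.inl j) = b + r) :
    (∃ P : Finset (Finset (Fin r ⊕ Fin b)), P.card ≤ k + 1 ∧
        (∀ X ∈ P, X.Nonempty ∧ X.card ≤ b ∧
          ∀ v, ∀ x ∈ X, ∀ y ∈ X,
            (pos v x : ℤ) - (pos v y : ℤ) ≤ ((r - b : ℕ) : ℤ) + (b : ℤ) - 1) ∧
        (∀ c, ∃ X ∈ P, c ∈ X) ∧
        (∀ X ∈ P, ∀ Y ∈ P, X ≠ Y → Disjoint X Y)) ↔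
      (∃ g : Fin r → Fin k,
        (∀ c : Fin k, (Finset.univ.filter (fun j => g j = c)).card = b) ∧
        (∀ i j : Fin r, g i = g j → ¬ G.Adj i j)) :=
  stmt_5_general hk hb hr G pos hv hw
end

section
/- Let k ≥ 1, let X be a finite set with |X| = 3k, and let S be a family of 3-element subsets of X such that every element of X lies in exactly 3 members of S. Let S_1,…,S_7 be a partition of S such that for each i ∈ {1,…,7} the members of S_i are pairwise disjoint; write S_i = {S_i^1,…,S_i^{ν_i}} and μ_i = 3k − 3ν_i. Let E=(C,V) be any election whose candidate set C consists of one original candidate for each element of X together with, for every i ∈ {1,…,7}, pairwise disjoint 3-element dummy triples A_i^1,…,A_i^{ν_i}, Ã_i^1,…,Ã_i^{μ_i}, B_i^1,…,B_i^{ν_i}, B̃_i^1,…,B̃_i^{μ_i}, all disjoint from the original candidates, and whose voters are exactly v_i and u_i for i ∈ {1,…,7}, defined as follows: letting y_1,…,y_{μ_i} be an arbitrary enumeration of the original candidates not covered by the members of S_i, voter v_i ranks, from top, the members of S_i^1, then of A_i^1, then of S_i^2, then of A_i^2, …, then of S_i^{ν_i}, then of A_i^{ν_i}, then y_1, then the members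 of Ã_i^1, then y_2, …, then y_{μ_i}, then the members of Ã_i^{μ_i}, and finally all remaining dummy candidates in an arbitrary order in which the three members of each dummy triple occupy consecutive positions (the order within each listed 3-element set being arbitrary); voter u_i is defined identically with B_i^h in place of A_i^h and B̃_i^h in place of Ã_i^h. Then C admits a partition into at most |C|/3 nonempty parts, each of size at most 3 and each ranked consecutively by at least 2 voters of E, if and only if there exist k pairwise disjoint members of S whose union is X. -/
/-- A voter with position function `p` ranks the set `X` consecutively:
`max_{x∈X} p x − min_{x∈X} p x = |X| − 1`. -/
def RanksConsec {C : Type*} [DecidableEq C] (p : C → ℕ) (X : Finset C) : Prop :=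
  ∀ h : X.Nonempty,
    (X.image p).max' (h.image p) - (X.image p).min' (h.image p) = X.card - 1

/-- The position function `p` ranks, from the top, the blocks in the list `L`: the members of
the `k`-th block occupy exactly the positions following those of the previous blocks. -/
def Stacked {C : Type*} (p : C → ℕ) (L : List (Finset C)) : Prop :=
  ∀ (k : ℕ) (hk : k < L.length), ∀ c ∈ L.get ⟨k, hk⟩,
    ((L.take k).map Finset.card).sum < p c ∧ p c ≤ ((L.take (k + 1)).map Finset.card).sum


/-!
A partition of `C` into at most `|C| / 3` parts of size at most `3` consists of triples. Each
voter ranks all original candidates within its top `6ν + 4μ` positions, interleaved with dummy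
triples that no other voter places there, so a part ranked consecutively by two distinct voters
cannot mix original and dummy candidates. An all-original triple ranked consecutively by `v_i` or
`u_i` is some `S_i^h`, because the uncovered candidates `y_ℓ` sit isolated between dummy triples;
hence the original parts form an exact cover. Conversely, an exact cover together with all dummy
triples is such a partition: `S_i^h` is consecutive for `v_i` and `u_i`, every `A`-triple for all
the `u_j`, and every `B`-triple for all the `v_j`.
-/

open Finset Function

section Positions

variable {C : Type*} {p : C → ℕ}

theorem image_eq_Icc_of_bounds (hp : Injective p) {X : Finset C} {a k : ℕ}
    (hk : #X = k) (hX : ∀ c ∈ X, a < p c ∧ p c ≤ a + k) : X.image p = Icc (a + 1) (a + k) := by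
  refine eq_of_subset_of_card_le (fun q hq => ?_) ?_
  · obtain ⟨c, hc, rfl⟩ := mem_image.mp hq
    have := hX c hc
    rw [mem_Icc]; omega
  · rw [card_image_of_injective _ hp, Nat.card_Icc]; omega

theorem exists_mem_pos_eq_of_bounds (hp : Injective p) {X : Finset C} {a k q : ℕ}
    (hk : #X = k) (hX : ∀ c ∈ X, a < p c ∧ p c ≤ a + k) (hq : a < q) (hq' : q ≤ a + k) :
    ∃ c ∈ X, p c = q := by
  have : q ∈ X.image p := by rw [image_eq_Icc_of_bounds hp hk hX, mem_Icc]; omega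
  simpa using this

theorem ranksConsec_of_bounds [DecidableEq C] (hp : Injective p) {X : Finset C}
    {a k : ℕ} (hk : #X = k) (hX : ∀ c ∈ X, a < p c ∧ p c ≤ a + k) : RanksConsec p X := by
  intro hne
  have hmem : ∀ r, r ∈ X.image p ↔ a + 1 ≤ r ∧ r ≤ a + k := by
    simp [image_eq_Icc_of_bounds hp hk hX]
  have hcard : 0 < #X := hne.card_pos
  have hmax : (X.image p).max' (hne.image p) = a + k :=
    le_antisymm (max'_le _ _ _ fun r hr => ((hmem r).mp hr).2)
      (le_max' _ _ ((hmem _).mpr (by omega)))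
  have hmin : (X.image p).min' (hne.image p) = a + 1 :=
    le_antisymm (min'_le _ _ ((hmem _).mpr (by omega)))
      (le_min' _ _ _ fun r hr => ((hmem r).mp hr).1)
  rw [hmax, hmin, hk]; omega

theorem RanksConsec.exists_image_eq_Icc [DecidableEq C] (hp : Injective p)
    {X : Finset C} (hne : X.Nonempty) (h : RanksConsec p X) :
    ∃ q, X.image p = Icc q (q + (#X - 1)) := by
  refine ⟨(X.image p).min' (hne.image p), ?_⟩
  have hmax := h hne
  have := hne.card_pos
  have := min'_le _ _ (max'_mem _ (hne.image p))
  refine eq_of_subset_of_card_le (fun r hr => ?_) ?_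
  · have := min'_le _ r hr
    have := le_max' _ r hr
    rw [mem_Icc]; omega
  · rw [card_image_of_injective _ hp, Nat.card_Icc]; omega

end Positions

section Partition

variable {α : Type*} [DecidableEq α]

theorem card_sup_id_of_pairwise_disjoint {P : Finset (Finset α)} {n : ℕ}
    (hdis : ∀ X ∈ P, ∀ Y ∈ P, X ≠ Y → Disjoint X Y) (hn : ∀ X ∈ P, #X = n) :
    #(P.sup id) = n * #P := by
  rw [sup_eq_biUnion, card_biUnion (t := id) hdis]
  simp [sum_congr rfl hn, mul_comm]

theorem sup_id_eq_univ [Fintype α] {P : Finset (Finset α)} (hcov : ∀ c, ∃ X ∈ P, c ∈ X) :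
    P.sup id = univ :=
  eq_univ_of_forall fun c => by simpa using hcov c

theorem card_eq_of_card_le_card_div [Fintype α] {P : Finset (Finset α)} {n : ℕ}
    (hcov : ∀ c, ∃ X ∈ P, c ∈ X) (hle : ∀ X ∈ P, #X ≤ n) (hP : #P ≤ Fintype.card α / n) :
    ∀ X ∈ P, #X = n := by
  by_contra! ⟨X, hX, hXn⟩
  have hsum : ∑ Y ∈ P, #Y < ∑ _Y ∈ P, n :=
    sum_lt_sum hle ⟨X, hX, lt_of_le_of_ne (hle X hX) hXn⟩
  have hunion : Fintype.card α ≤ ∑ Y ∈ P, #Y := by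
    rw [← card_univ, ← sup_id_eq_univ hcov, sup_eq_biUnion]; exact card_biUnion_le
  have hn : 0 < n := by have := hle X hX; omega
  have := (Nat.le_div_iff_mul_le hn).mp hP
  rw [sum_const, smul_eq_mul] at hsum
  omega

end Partition

section Stacked

variable {C : Type*} {p : C → ℕ}

def StackedFrom (p : C → ℕ) (b : ℕ) (L : List (Finset C)) : Prop :=
  ∀ (k : ℕ) (hk : k < L.length), ∀ c ∈ L.get ⟨k, hk⟩,
    b + ((L.take k).map Finset.card).sum < p c ∧ p c ≤ b + ((L.take (k + 1)).map Finset.card).sum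

theorem stacked_iff_stackedFrom_zero {L : List (Finset C)} : Stacked p L ↔ StackedFrom p 0 L := by
  simp [Stacked, StackedFrom]

theorem stackedFrom_cons_iff {b : ℕ} {T : Finset C} {L : List (Finset C)} :
    StackedFrom p b (T :: L) ↔
      (∀ c ∈ T, b < p c ∧ p c ≤ b + #T) ∧ StackedFrom p (b + #T) L := by
  constructor
  · intro H
    refine ⟨fun c hc => by simpa using H 0 (by simp) c (by simpa using hc), fun k hk c hc => ?_⟩
    have := H (k + 1) (by simpa using hk) c (by simpa using hc)
    simp only [List.take_succ_cons, List.map_cons, List.sum_cons] at this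
    omega
  · rintro ⟨hT, hL⟩ (_ | k) hk c hc
    · simpa using hT c (by simpa using hc)
    · have := hL k (by simpa using hk) c (by simpa using hc)
      simp only [List.take_succ_cons, List.map_cons, List.sum_cons]
      omega

theorem stackedFrom_append_iff {b : ℕ} {L₁ L₂ : List (Finset C)} :
    StackedFrom p b (L₁ ++ L₂) ↔
      StackedFrom p b L₁ ∧ StackedFrom p (b + (L₁.map Finset.card).sum) L₂ := by
  induction L₁ generalizing b with
  | nil => simp [StackedFrom]
  | cons T L ih =>
    simp only [List.cons_append, stackedFrom_cons_iff, ih, List.map_cons, List.sum_cons, and_assoc,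
      add_assoc]

theorem sum_map_card_flatten_ofFn_pair {n a a' : ℕ} {f g : Fin n → Finset C}
    (hf : ∀ h, #(f h) = a) (hg : ∀ h, #(g h) = a') :
    (((List.ofFn fun h => [f h, g h]).flatten).map Finset.card).sum = (a + a') * n := by
  induction n with
  | zero => simp
  | succ n ih =>
    simp only [List.ofFn_succ, List.flatten_cons, List.map_append, List.sum_append,
      ih (fun h => hf h.succ) (fun h => hg h.succ), List.map_cons, List.map_nil, List.sum_cons,
      List.sum_nil, hf, hg, add_zero]
    ring

theorem StackedFrom.bounds_of_flatten_ofFn_pair {n a a' b : ℕ} {f g : Fin n → Finset C}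
    (hf : ∀ h, #(f h) = a) (hg : ∀ h, #(g h) = a')
    (H : StackedFrom p b (List.ofFn fun h => [f h, g h]).flatten) (h : Fin n) :
    (∀ c ∈ f h, b + (a + a') * h < p c ∧ p c ≤ b + (a + a') * h + a) ∧
      (∀ c ∈ g h, b + (a + a') * h + a < p c ∧ p c ≤ b + (a + a') * h + (a + a')) := by
  induction n generalizing b with
  | zero => exact h.elim0
  | succ n ih =>
    simp only [List.ofFn_succ, List.flatten_cons, List.cons_append, List.nil_append,
      stackedFrom_cons_iff, hf, hg] at H
    obtain ⟨H₀, H₁, H⟩ := H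
    induction h using Fin.cases with
    | zero =>
      simp only [Fin.val_zero, mul_zero, add_zero]
      exact ⟨H₀, fun c hc => by have := H₁ c hc; omega⟩
    | succ h =>
      obtain ⟨ih₁, ih₂⟩ := ih (fun h => hf h.succ) (fun h => hg h.succ) H h
      rw [Fin.val_succ, Nat.mul_succ]
      exact ⟨fun c hc => by have := ih₁ c hc; omega, fun c hc => by have := ih₂ c hc; omega⟩

end Stacked

section Layout

variable {C : Type*} {p : C → ℕ} {n m : ℕ} {S D : Fin n → Finset C} {y : Fin m → C}
  {D' : Fin m → Finset C}

/-- The top `6n + 4m` positions of `p` hold, in this order, the triples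
`S 0, D 0, …, S (n-1), D (n-1)`, then `y 0`, the triple `D' 0`, …, `y (m-1)`, `D' (m-1)`. -/
structure ReductionRanking (p : C → ℕ) (S D : Fin n → Finset C) (y : Fin m → C)
    (D' : Fin m → Finset C) : Prop where
  card_S : ∀ h, #(S h) = 3
  card_D : ∀ h, #(D h) = 3
  card_D' : ∀ ℓ, #(D' ℓ) = 3
  pos_S : ∀ h, ∀ c ∈ S h, 6 * h < p c ∧ p c ≤ 6 * h + 3
  pos_D : ∀ h, ∀ c ∈ D h, 6 * h + 3 < p c ∧ p c ≤ 6 * h + 3 + 3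
  pos_y : ∀ ℓ, p (y ℓ) = 6 * n + 4 * ℓ + 1
  pos_D' : ∀ ℓ, ∀ c ∈ D' ℓ, 6 * n + 4 * ℓ + 1 < p c ∧ p c ≤ 6 * n + 4 * ℓ + 1 + 3

theorem reductionRanking_of_stacked (hS : ∀ h, #(S h) = 3) (hD : ∀ h, #(D h) = 3)
    (hD' : ∀ ℓ, #(D' ℓ) = 3)
    (H : Stacked p ((List.ofFn fun h => [S h, D h]).flatten ++
      (List.ofFn fun ℓ => [({y ℓ} : Finset C), D' ℓ]).flatten)) :
    ReductionRanking p S D y D' := by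
  rw [stacked_iff_stackedFrom_zero, stackedFrom_append_iff,
    sum_map_card_flatten_ofFn_pair hS hD] at H
  have B₁ := H.1.bounds_of_flatten_ofFn_pair hS hD
  have B₂ := H.2.bounds_of_flatten_ofFn_pair (fun _ => card_singleton _) hD'
  refine ⟨hS, hD, hD', fun h c hc => ?_, fun h c hc => ?_, fun ℓ => ?_, fun ℓ c hc => ?_⟩
  · have := (B₁ h).1 c hc; omega
  · have := (B₁ h).2 c hc; omega
  · have := (B₂ ℓ).1 (y ℓ) (mem_singleton_self _); omega
  · have := (B₂ ℓ).2 c hc; omega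

namespace ReductionRanking

variable (R : ReductionRanking p S D y D')
include R

theorem ranksConsec_S [DecidableEq C] (hp : Injective p) (h : Fin n) :
    RanksConsec p (S h) :=
  ranksConsec_of_bounds hp (R.card_S h) (R.pos_S h)

theorem pos_add_three_le {c : C} (hc : (∃ h, c ∈ S h) ∨ ∃ ℓ, y ℓ = c) :
    p c + 3 ≤ 6 * n + 4 * m := by
  rcases hc with ⟨h, hc⟩ | ⟨ℓ, rfl⟩
  · have := R.pos_S h c hc; have := h.isLt; omega
  · have := R.pos_y ℓ; have := ℓ.isLt; omega

theorem mem_of_pos_le (hp : Injective p) (hp₁ : ∀ c, 1 ≤ p c) {d : C}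
    (hd : p d ≤ 6 * n + 4 * m) :
    (∃ h, d ∈ S h) ∨ (∃ h, d ∈ D h) ∨ (∃ ℓ, y ℓ = d) ∨ (∃ ℓ, d ∈ D' ℓ) := by
  have := hp₁ d
  by_cases hn : p d ≤ 6 * n
  · let h : Fin n := ⟨(p d - 1) / 6, by omega⟩
    have hh : (h : ℕ) = (p d - 1) / 6 := rfl
    by_cases hS : p d ≤ 6 * h + 3
    · obtain ⟨c, hc, hcd⟩ :=
        exists_mem_pos_eq_of_bounds hp (q := p d) (R.card_S h) (R.pos_S h) (by omega) hS
      exact .inl ⟨h, hp hcd ▸ hc⟩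
    · obtain ⟨c, hc, hcd⟩ :=
        exists_mem_pos_eq_of_bounds hp (q := p d) (R.card_D h) (R.pos_D h) (by omega) (by omega)
      exact .inr (.inl ⟨h, hp hcd ▸ hc⟩)
  · let ℓ : Fin m := ⟨(p d - 6 * n - 1) / 4, by omega⟩
    have hℓ : (ℓ : ℕ) = (p d - 6 * n - 1) / 4 := rfl
    by_cases hy : p d = 6 * n + 4 * ℓ + 1
    · exact .inr (.inr (.inl ⟨ℓ, hp (by rw [R.pos_y, hy])⟩))
    · obtain ⟨c, hc, hcd⟩ :=
        exists_mem_pos_eq_of_bounds hp (q := p d) (R.card_D' ℓ) (R.pos_D' ℓ) (by omega)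
          (by omega)
      exact .inr (.inr (.inr ⟨ℓ, hp hcd ▸ hc⟩))

variable {orig : Finset C} (hcover : ∀ c ∈ orig, (∃ h, c ∈ S h) ∨ ∃ ℓ, y ℓ = c)
include hcover

theorem mem_D_or_D'_of_ranksConsec [DecidableEq C] (hp : Injective p)
    (hp₁ : ∀ c, 1 ≤ p c) (hS : ∀ h, S h ⊆ orig) (hy : ∀ ℓ, y ℓ ∈ orig) {X : Finset C}
    (hX : #X = 3) (hXc : RanksConsec p X) {c d : C} (hc : c ∈ X) (hco : c ∈ orig) (hd : d ∈ X)
    (hdo : d ∉ orig) : (∃ h, d ∈ D h) ∨ ∃ ℓ, d ∈ D' ℓ := by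
  obtain ⟨q, hq⟩ := hXc.exists_image_eq_Icc hp ⟨c, hc⟩
  have hcq := mem_Icc.mp (hq ▸ mem_image_of_mem p hc)
  have hdq := mem_Icc.mp (hq ▸ mem_image_of_mem p hd)
  have := R.pos_add_three_le (hcover c hco)
  rcases R.mem_of_pos_le hp hp₁ (d := d) (by omega) with ⟨h, hh⟩ | hD | ⟨ℓ, rfl⟩ | hD'
  · exact absurd (hS h hh) hdo
  · exact .inl hD
  · exact absurd (hy ℓ) hdo
  · exact .inr hD'

theorem exists_eq_S_of_ranksConsec [DecidableEq C] (hp : Injective p) {X : Finset C}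
    (hXo : X ⊆ orig) (hX : #X = 3) (hXc : RanksConsec p X) : ∃ h, X = S h := by
  obtain ⟨q, hq⟩ := hXc.exists_image_eq_Icc hp (card_pos.mp (by omega))
  rw [hX] at hq
  have hpos : ∀ r, q ≤ r → r ≤ q + 2 →
      (∃ h < n, 6 * h < r ∧ r ≤ 6 * h + 3) ∨ ∃ ℓ < m, r = 6 * n + 4 * ℓ + 1 := by
    intro r h₁ h₂
    have hr : r ∈ X.image p := hq ▸ mem_Icc.mpr ⟨h₁, by omega⟩
    obtain ⟨c, hc, rfl⟩ := mem_image.mp hr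
    rcases hcover c (hXo hc) with ⟨h, hh⟩ | ⟨ℓ, rfl⟩
    · exact .inl ⟨h, h.isLt, R.pos_S h c hh⟩
    · exact .inr ⟨ℓ, ℓ.isLt, R.pos_y ℓ⟩
  -- original candidates sit at isolated positions or fill the three positions of some `S h`
  obtain ⟨h, hh, rfl⟩ : ∃ h < n, q = 6 * h + 1 := by
    rcases hpos q le_rfl (by omega) with ⟨h₀, h₀'⟩ | ⟨ℓ₀, h₀'⟩ <;>
    rcases hpos (q + 1) (by omega) (by omega) with ⟨h₁, h₁'⟩ | ⟨ℓ₁, h₁'⟩ <;>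
    rcases hpos (q + 2) (by omega) le_rfl with ⟨h₂, h₂'⟩ | ⟨ℓ₂, h₂'⟩ <;>
    first
    | exact ⟨h₀, h₀'.1, by omega⟩
    | omega
  refine ⟨⟨h, hh⟩, image_injective hp ?_⟩
  rw [hq, image_eq_Icc_of_bounds hp (R.card_S _) (R.pos_S _)]

end ReductionRanking

end Layout

section Reduction

variable {C W : Type*} [Fintype C] [DecidableEq C] {pos : W → C → ℕ} {orig : Finset C}
  {SS : Finset (Finset C)}

theorem exists_exactCover_of_partition {k : ℕ} (horig : #orig = 3 * k) {κ : W → Type*}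
    (D : (Σ w, κ w) → Finset C) (hDD : Pairwise (Disjoint on D))
    (hmixed : ∀ w X, #X = 3 → RanksConsec (pos w) X →
      ∀ c ∈ X, c ∈ orig → ∀ d ∈ X, d ∉ orig → ∃ j, d ∈ D ⟨w, j⟩)
    (hpure : ∀ w X, #X = 3 → X ⊆ orig → RanksConsec (pos w) X → X ∈ SS)
    {P : Finset (Finset C)} (hPcard : #P ≤ Fintype.card C / 3)
    (hP : ∀ X ∈ P, X.Nonempty ∧ #X ≤ 3 ∧
      ∃ v₁ v₂ : W, v₁ ≠ v₂ ∧ RanksConsec (pos v₁) X ∧ RanksConsec (pos v₂) X)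
    (hcov : ∀ c, ∃ X ∈ P, c ∈ X) (hdis : ∀ X ∈ P, ∀ Y ∈ P, X ≠ Y → Disjoint X Y) :
    ∃ SS' ⊆ SS, #SS' = k ∧ (∀ T ∈ SS', ∀ T' ∈ SS', T ≠ T' → Disjoint T T') ∧
      SS'.sup id = orig := by
  have h3 := card_eq_of_card_le_card_div hcov (fun X hX => (hP X hX).2.1) hPcard
  have hsplit : ∀ X ∈ P, X ⊆ orig ∨ Disjoint X orig := by
    intro X hX
    by_contra! ⟨hsub, hndisj⟩
    obtain ⟨d, hd, hdo⟩ := not_subset.mp hsub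
    obtain ⟨c, hc, hco⟩ := not_disjoint_iff.mp hndisj
    obtain ⟨-, -, v₁, v₂, hne, h₁, h₂⟩ := hP X hX
    obtain ⟨j₁, hj₁⟩ := hmixed v₁ X (h3 X hX) h₁ c hc hco d hd hdo
    obtain ⟨j₂, hj₂⟩ := hmixed v₂ X (h3 X hX) h₂ c hc hco d hd hdo
    exact disjoint_left.mp (hDD fun e => hne (congrArg Sigma.fst e)) hj₁ hj₂
  set SS' := P.filter (· ⊆ orig)
  have hsup : SS'.sup id = orig := by
    refine le_antisymm (Finset.sup_le fun X hX => (mem_filter.mp hX).2) fun c hc => ?_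
    obtain ⟨X, hX, hcX⟩ := hcov c
    have hXo : X ⊆ orig := (hsplit X hX).resolve_right (not_disjoint_iff.mpr ⟨c, hcX, hc⟩)
    exact mem_sup.mpr ⟨X, mem_filter.mpr ⟨hX, hXo⟩, hcX⟩
  have hdis' : ∀ X ∈ SS', ∀ Y ∈ SS', X ≠ Y → Disjoint X Y := fun X hX Y hY =>
    hdis X (mem_filter.mp hX).1 Y (mem_filter.mp hY).1
  refine ⟨SS', fun X hX => ?_, ?_, hdis', hsup⟩
  · obtain ⟨hXP, hXo⟩ := mem_filter.mp hX
    obtain ⟨-, -, v, -, -, hv, -⟩ := hP X hXP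
    exact hpure v X (h3 X hXP) hXo hv
  · have := card_sup_id_of_pairwise_disjoint hdis' fun X hX => h3 X (mem_filter.mp hX).1
    rw [hsup, horig] at this
    omega

theorem exists_partition_of_exactCover {SS' : Finset (Finset C)} (hSS' : SS' ⊆ SS)
    (hdisj : ∀ T ∈ SS', ∀ T' ∈ SS', T ≠ T' → Disjoint T T') (hsup : SS'.sup id = orig)
    (hSS : ∀ T ∈ SS, T ⊆ orig ∧ #T = 3 ∧
      ∃ v₁ v₂ : W, v₁ ≠ v₂ ∧ RanksConsec (pos v₁) T ∧ RanksConsec (pos v₂) T)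
    {J : Type*} [Fintype J] (D : J → Finset C)
    (hD : ∀ j, #(D j) = 3 ∧
      ∃ v₁ v₂ : W, v₁ ≠ v₂ ∧ RanksConsec (pos v₁) (D j) ∧ RanksConsec (pos v₂) (D j))
    (hDD : Pairwise (Disjoint on D)) (hDo : ∀ j, Disjoint (D j) orig)
    (hcover : ∀ c, c ∈ orig ∨ ∃ j, c ∈ D j) :
    ∃ P : Finset (Finset C), #P ≤ Fintype.card C / 3 ∧
      (∀ X ∈ P, X.Nonempty ∧ #X ≤ 3 ∧
        ∃ v₁ v₂ : W, v₁ ≠ v₂ ∧ RanksConsec (pos v₁) X ∧ RanksConsec (pos v₂) X) ∧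
      (∀ c, ∃ X ∈ P, c ∈ X) ∧ (∀ X ∈ P, ∀ Y ∈ P, X ≠ Y → Disjoint X Y) := by
  have hP : ∀ X ∈ SS' ∪ univ.image D, #X = 3 ∧
      ∃ v₁ v₂ : W, v₁ ≠ v₂ ∧ RanksConsec (pos v₁) X ∧ RanksConsec (pos v₂) X := by
    simp only [forall_mem_union, forall_mem_image]
    exact ⟨fun T hT => (hSS T (hSS' hT)).2, fun j _ => hD j⟩
  have hcov : ∀ c, ∃ X ∈ SS' ∪ univ.image D, c ∈ X := by
    intro c
    rcases hcover c with hc | ⟨j, hc⟩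
    · obtain ⟨T, hT, hcT⟩ := mem_sup.mp (hsup ▸ hc : c ∈ SS'.sup id)
      exact ⟨T, mem_union_left _ hT, hcT⟩
    · exact ⟨D j, mem_union_right _ (mem_image_of_mem D (mem_univ j)), hc⟩
  have hdis : ∀ X ∈ SS' ∪ univ.image D, ∀ Y ∈ SS' ∪ univ.image D, X ≠ Y → Disjoint X Y := by
    have hTD : ∀ T ∈ SS', ∀ j, Disjoint T (D j) := fun T hT j =>
      ((hDo j).mono_right (hSS T (hSS' hT)).1).symm
    simp only [forall_mem_union, forall_mem_image]
    exact ⟨fun T hT => ⟨hdisj T hT, fun j _ _ => hTD T hT j⟩,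
      fun j _ => ⟨fun T hT _ => (hTD T hT j).symm, fun j' _ hne => hDD fun e => hne (e ▸ rfl)⟩⟩
  refine ⟨SS' ∪ univ.image D, ?_, fun X hX => ?_, hcov, hdis⟩
  · have := card_sup_id_of_pairwise_disjoint hdis fun X hX => (hP X hX).1
    rw [sup_id_eq_univ hcov, card_univ] at this
    omega
  · obtain ⟨h3, hby⟩ := hP X hX
    exact ⟨card_pos.mp (by omega), h3.le, hby⟩

end Reduction

section Dummies

variable {C ι : Type*} {ν μ : ι → ℕ} {A B : (i : ι) → Fin (ν i) → Finset C}
  {A' B' : (i : ι) → Fin (μ i) → Finset C}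

/-- The dummy triples that voter `w` ranks among the original candidates: those of `A` and `A'`
for `w = .inl i` (the voter `v_i`), those of `B` and `B'` for `w = .inr i` (the voter `u_i`). -/
def dummyTriple (A B : (i : ι) → Fin (ν i) → Finset C) (A' B' : (i : ι) → Fin (μ i) → Finset C) :
    (Σ w : ι ⊕ ι, Fin (ν (w.elim id id)) ⊕ Fin (μ (w.elim id id))) → Finset C
  | ⟨.inl i, .inl h⟩ => A i h
  | ⟨.inl i, .inr ℓ⟩ => A' i ℓ
  | ⟨.inr i, .inl h⟩ => B i h
  | ⟨.inr i, .inr ℓ⟩ => B' i ℓ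

theorem pairwise_disjoint_dummyTriple
    (hAA : ∀ i h i' h', (⟨i, h⟩ : Σ i, Fin (ν i)) ≠ ⟨i', h'⟩ → Disjoint (A i h) (A i' h'))
    (hBB : ∀ i h i' h', (⟨i, h⟩ : Σ i, Fin (ν i)) ≠ ⟨i', h'⟩ → Disjoint (B i h) (B i' h'))
    (hA'A' : ∀ i ℓ i' ℓ', (⟨i, ℓ⟩ : Σ i, Fin (μ i)) ≠ ⟨i', ℓ'⟩ → Disjoint (A' i ℓ) (A' i' ℓ'))
    (hB'B' : ∀ i ℓ i' ℓ', (⟨i, ℓ⟩ : Σ i, Fin (μ i)) ≠ ⟨i', ℓ'⟩ → Disjoint (B' i ℓ) (B' i' ℓ'))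
    (hAB : ∀ i h i' h', Disjoint (A i h) (B i' h'))
    (hAA' : ∀ i h i' ℓ', Disjoint (A i h) (A' i' ℓ'))
    (hAB' : ∀ i h i' ℓ', Disjoint (A i h) (B' i' ℓ'))
    (hBA' : ∀ i h i' ℓ', Disjoint (B i h) (A' i' ℓ'))
    (hBB' : ∀ i h i' ℓ', Disjoint (B i h) (B' i' ℓ'))
    (hA'B' : ∀ i ℓ i' ℓ', Disjoint (A' i ℓ) (B' i' ℓ')) :
    Pairwise (Disjoint on dummyTriple A B A' B') := by
  rintro ⟨i | i, h | h⟩ ⟨i' | i', h' | h'⟩ hne <;> simp only [Function.onFun, dummyTriple]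
  · exact hAA i h i' h' fun e => hne (by cases e; rfl)
  · exact hAA' i h i' h'
  · exact hAB i h i' h'
  · exact hAB' i h i' h'
  · exact (hAA' i' h' i h).symm
  · exact hA'A' i h i' h' fun e => hne (by cases e; rfl)
  · exact (hBA' i' h' i h).symm
  · exact hA'B' i h i' h'
  · exact (hAB i' h' i h).symm
  · exact hBA' i h i' h'
  · exact hBB i h i' h' fun e => hne (by cases e; rfl)
  · exact hBB' i h i' h'
  · exact (hAB' i' h' i h).symm
  · exact (hA'B' i' h' i h).symm
  · exact (hBB' i' h' i h).symm
  · exact hB'B' i h i' h' fun e => hne (by cases e; rfl)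

theorem exists_mem_dummyTriple {c : C}
    (hc : (∃ i h, c ∈ A i h) ∨ (∃ i h, c ∈ B i h) ∨ (∃ i ℓ, c ∈ A' i ℓ) ∨ ∃ i ℓ, c ∈ B' i ℓ) :
    ∃ j, c ∈ dummyTriple A B A' B' j := by
  rcases hc with ⟨i, h, hc⟩ | ⟨i, h, hc⟩ | ⟨i, ℓ, hc⟩ | ⟨i, ℓ, hc⟩
  exacts [⟨⟨.inl i, .inl h⟩, hc⟩, ⟨⟨.inr i, .inl h⟩, hc⟩, ⟨⟨.inl i, .inr ℓ⟩, hc⟩,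
    ⟨⟨.inr i, .inr ℓ⟩, hc⟩]

end Dummies

theorem stmt_9_general {C : Type*} [Fintype C] [DecidableEq C]
    (k : ℕ)
    (orig : Finset C) (horig : orig.card = 3 * k)
    (SS : Finset (Finset C))
    (hSS : ∀ T ∈ SS, T ⊆ orig ∧ T.card = 3)
    (ν μ : Fin 7 → ℕ)
    (sE : (i : Fin 7) → Fin (ν i) → Finset C)
    (hpart : ∀ T ∈ SS, ∃! p : Σ i : Fin 7, Fin (ν i), sE p.1 p.2 = T)
    (hmem : ∀ i h, sE i h ∈ SS)
    (y : (i : Fin 7) → Fin (μ i) → C)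
    (hyrange : ∀ (i : Fin 7) (c : C),
      (∃ ℓ, y i ℓ = c) ↔ (c ∈ orig ∧ ∀ h, c ∉ sE i h))
    (A B : (i : Fin 7) → Fin (ν i) → Finset C)
    (A' B' : (i : Fin 7) → Fin (μ i) → Finset C)
    (hA3 : ∀ i h, (A i h).card = 3) (hB3 : ∀ i h, (B i h).card = 3)
    (hA'3 : ∀ i ℓ, (A' i ℓ).card = 3) (hB'3 : ∀ i ℓ, (B' i ℓ).card = 3)
    (hAo : ∀ i h, Disjoint (A i h) orig) (hBo : ∀ i h, Disjoint (B i h) orig)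
    (hA'o : ∀ i ℓ, Disjoint (A' i ℓ) orig) (hB'o : ∀ i ℓ, Disjoint (B' i ℓ) orig)
    (hAA : ∀ i h i' h', (⟨i, h⟩ : Σ i : Fin 7, Fin (ν i)) ≠ ⟨i', h'⟩ →
      Disjoint (A i h) (A i' h'))
    (hBB : ∀ i h i' h', (⟨i, h⟩ : Σ i : Fin 7, Fin (ν i)) ≠ ⟨i', h'⟩ →
      Disjoint (B i h) (B i' h'))
    (hA'A' : ∀ i ℓ i' ℓ', (⟨i, ℓ⟩ : Σ i : Fin 7, Fin (μ i)) ≠ ⟨i', ℓ'⟩ →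
      Disjoint (A' i ℓ) (A' i' ℓ'))
    (hB'B' : ∀ i ℓ i' ℓ', (⟨i, ℓ⟩ : Σ i : Fin 7, Fin (μ i)) ≠ ⟨i', ℓ'⟩ →
      Disjoint (B' i ℓ) (B' i' ℓ'))
    (hAB : ∀ i h i' h', Disjoint (A i h) (B i' h'))
    (hAA' : ∀ i h i' ℓ', Disjoint (A i h) (A' i' ℓ'))
    (hAB' : ∀ i h i' ℓ', Disjoint (A i h) (B' i' ℓ'))
    (hBA' : ∀ i h i' ℓ', Disjoint (B i h) (A' i' ℓ'))
    (hBB' : ∀ i h i' ℓ', Disjoint (B i h) (B' i' ℓ'))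
    (hA'B' : ∀ i ℓ i' ℓ', Disjoint (A' i ℓ) (B' i' ℓ'))
    (hcover : ∀ c : C, c ∈ orig ∨ (∃ i h, c ∈ A i h) ∨ (∃ i h, c ∈ B i h) ∨
      (∃ i ℓ, c ∈ A' i ℓ) ∨ (∃ i ℓ, c ∈ B' i ℓ))
    (pos : (Fin 7 ⊕ Fin 7) → C → ℕ)
    (hbij : ∀ v, Set.BijOn (pos v) Set.univ (Set.Icc 1 (Fintype.card C)))
    (hv : ∀ i : Fin 7, Stacked (pos (Sum.inl i))
      ((List.ofFn (fun h : Fin (ν i) => [sE i h, A i h])).flatten ++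
        (List.ofFn (fun ℓ : Fin (μ i) => [({y i ℓ} : Finset C), A' i ℓ])).flatten))
    (hu : ∀ i : Fin 7, Stacked (pos (Sum.inr i))
      ((List.ofFn (fun h : Fin (ν i) => [sE i h, B i h])).flatten ++
        (List.ofFn (fun ℓ : Fin (μ i) => [({y i ℓ} : Finset C), B' i ℓ])).flatten))
    (hvB : ∀ i i' h, RanksConsec (pos (Sum.inl i)) (B i' h))
    (hvB' : ∀ i i' ℓ, RanksConsec (pos (Sum.inl i)) (B' i' ℓ))
    (huA : ∀ i i' h, RanksConsec (pos (Sum.inr i)) (A i' h))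
    (huA' : ∀ i i' ℓ, RanksConsec (pos (Sum.inr i)) (A' i' ℓ)) :
    (∃ P : Finset (Finset C), P.card ≤ Fintype.card C / 3 ∧
        (∀ X ∈ P, X.Nonempty ∧ X.card ≤ 3 ∧
          ∃ v₁ v₂ : Fin 7 ⊕ Fin 7, v₁ ≠ v₂ ∧
            RanksConsec (pos v₁) X ∧ RanksConsec (pos v₂) X) ∧
        (∀ c : C, ∃ X ∈ P, c ∈ X) ∧
        (∀ X ∈ P, ∀ Y ∈ P, X ≠ Y → Disjoint X Y)) ↔
      (∃ SS' ⊆ SS, SS'.card = k ∧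
        (∀ T ∈ SS', ∀ T' ∈ SS', T ≠ T' → Disjoint T T') ∧
        SS'.sup id = orig) := by
  have hp : ∀ w, Injective (pos w) := fun w => Set.injOn_univ.mp (hbij w).injOn
  have hp₁ : ∀ w c, 1 ≤ pos w c := fun w c => ((hbij w).mapsTo (Set.mem_univ c)).1
  have hsE : ∀ i h, sE i h ⊆ orig ∧ #(sE i h) = 3 := fun i h => hSS _ (hmem i h)
  have hy : ∀ i ℓ, y i ℓ ∈ orig := fun i ℓ => ((hyrange i _).mp ⟨ℓ, rfl⟩).1
  have hcover_orig : ∀ i, ∀ c ∈ orig, (∃ h, c ∈ sE i h) ∨ ∃ ℓ, y i ℓ = c := fun i c hc =>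
    or_iff_not_imp_left.mpr fun hS => (hyrange i c).mpr ⟨hc, fun h hh => hS ⟨h, hh⟩⟩
  set D := dummyTriple A B A' B'
  have hDD : Pairwise (Disjoint on D) :=
    pairwise_disjoint_dummyTriple hAA hBB hA'A' hB'B' hAB hAA' hAB' hBA' hBB' hA'B'
  have hR : ∀ w, ReductionRanking (pos w) (sE (w.elim id id)) (fun h => D ⟨w, .inl h⟩)
      (y (w.elim id id)) (fun ℓ => D ⟨w, .inr ℓ⟩) := by
    rintro (i | i)
    · exact reductionRanking_of_stacked (fun h => (hsE i h).2) (hA3 i) (hA'3 i) (hv i)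
    · exact reductionRanking_of_stacked (fun h => (hsE i h).2) (hB3 i) (hB'3 i) (hu i)
  constructor
  · rintro ⟨P, hPcard, hP, hcov, hdis⟩
    refine exists_exactCover_of_partition horig D hDD (fun w X hX hXc c hc hco d hd hdo => ?_)
      (fun w X hX hXo hXc => ?_) hPcard hP hcov hdis
    · rcases (hR w).mem_D_or_D'_of_ranksConsec (hcover_orig _) (hp w) (hp₁ w)
        (fun h => (hsE _ h).1) (hy _) hX hXc hc hco hd hdo with ⟨h, hh⟩ | ⟨ℓ, hℓ⟩
      exacts [⟨.inl h, hh⟩, ⟨.inr ℓ, hℓ⟩]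
    · obtain ⟨h, rfl⟩ := (hR w).exists_eq_S_of_ranksConsec (hcover_orig _) (hp w) hXo hX hXc
      exact hmem _ h
  · rintro ⟨SS', hSS', -, hdisj', hsup⟩
    refine exists_partition_of_exactCover hSS' hdisj' hsup (fun T hT => ?_) D ?_ hDD ?_ ?_
    · obtain ⟨⟨i, h⟩, rfl, -⟩ := hpart T hT
      exact ⟨(hsE i h).1, (hsE i h).2, .inl i, .inr i, Sum.inl_ne_inr,
        (hR (.inl i)).ranksConsec_S (hp _) h, (hR (.inr i)).ranksConsec_S (hp _) h⟩
    · rintro ⟨i | i, h | ℓ⟩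
      · exact ⟨hA3 i h, .inr 0, .inr 1, by decide, huA 0 i h, huA 1 i h⟩
      · exact ⟨hA'3 i ℓ, .inr 0, .inr 1, by decide, huA' 0 i ℓ, huA' 1 i ℓ⟩
      · exact ⟨hB3 i h, .inl 0, .inl 1, by decide, hvB 0 i h, hvB 1 i h⟩
      · exact ⟨hB'3 i ℓ, .inl 0, .inl 1, by decide, hvB' 0 i ℓ, hvB' 1 i ℓ⟩
    · rintro ⟨i | i, h | ℓ⟩
      exacts [hAo i h, hA'o i ℓ, hBo i h, hB'o i ℓ]
    · exact fun c => (hcover c).imp_right exists_mem_dummyTriple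

/-- (RX3C → independent-clone partition reduction.) Let `k ≥ 1`, let `orig`
be the set of original candidates (one per element of the RX3C ground set, `|orig| = 3k`), and
`SS` an RX3C family on it. Let `SS` be partitioned into classes `S_1,…,S_7` with pairwise
disjoint members, class `i` enumerated by `sE i : Fin (ν i) → Finset C`, and for each `i` let
`y i : Fin (μ i) → C` (with `μ i = 3k − 3 ν i`) enumerate the original candidates not covered
by class `i`. Let `A i h, Ã i ℓ, B i h, B̃ i ℓ` be pairwise disjoint dummy triples, disjoint
from `orig`, together with `orig` exhausting the candidate set. The voters are exactly
`v_1,…,v_7, u_1,…,u_7` with the stacked rankings described in the statement, each ranking the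
remaining dummy triples consecutively at the bottom. Then the candidates admit a partition
into at most `|C|/3` nonempty parts, each of size at most 3 and each ranked consecutively
by at least 2 voters, iff there exist `k` pairwise disjoint members of `SS` whose union
is `orig`. -/
theorem stmt_9 {C : Type*} [Fintype C] [DecidableEq C]
    (k : ℕ) (hk : 1 ≤ k)
    (orig : Finset C) (horig : orig.card = 3 * k)
    (SS : Finset (Finset C))
    (hSS : ∀ T ∈ SS, T ⊆ orig ∧ T.card = 3)
    (hocc : ∀ x ∈ orig, (SS.filter (fun T => x ∈ T)).card = 3)
    (ν μ : Fin 7 → ℕ) (hμ : ∀ i, μ i = 3 * k - 3 * ν i)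
    (sE : (i : Fin 7) → Fin (ν i) → Finset C)
    (hpart : ∀ T ∈ SS, ∃! p : Σ i : Fin 7, Fin (ν i), sE p.1 p.2 = T)
    (hmem : ∀ i h, sE i h ∈ SS)
    (hdisj : ∀ (i : Fin 7) (h h' : Fin (ν i)), h ≠ h' → Disjoint (sE i h) (sE i h'))
    (y : (i : Fin 7) → Fin (μ i) → C)
    (hyinj : ∀ i, Function.Injective (y i))
    (hyrange : ∀ (i : Fin 7) (c : C),
      (∃ ℓ, y i ℓ = c) ↔ (c ∈ orig ∧ ∀ h, c ∉ sE i h))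
    (A B : (i : Fin 7) → Fin (ν i) → Finset C)
    (A' B' : (i : Fin 7) → Fin (μ i) → Finset C)
    (hA3 : ∀ i h, (A i h).card = 3) (hB3 : ∀ i h, (B i h).card = 3)
    (hA'3 : ∀ i ℓ, (A' i ℓ).card = 3) (hB'3 : ∀ i ℓ, (B' i ℓ).card = 3)
    (hAo : ∀ i h, Disjoint (A i h) orig) (hBo : ∀ i h, Disjoint (B i h) orig)
    (hA'o : ∀ i ℓ, Disjoint (A' i ℓ) orig) (hB'o : ∀ i ℓ, Disjoint (B' i ℓ) orig)
    (hAA : ∀ i h i' h', (⟨i, h⟩ : Σ i : Fin 7, Fin (ν i)) ≠ ⟨i', h'⟩ →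
      Disjoint (A i h) (A i' h'))
    (hBB : ∀ i h i' h', (⟨i, h⟩ : Σ i : Fin 7, Fin (ν i)) ≠ ⟨i', h'⟩ →
      Disjoint (B i h) (B i' h'))
    (hA'A' : ∀ i ℓ i' ℓ', (⟨i, ℓ⟩ : Σ i : Fin 7, Fin (μ i)) ≠ ⟨i', ℓ'⟩ →
      Disjoint (A' i ℓ) (A' i' ℓ'))
    (hB'B' : ∀ i ℓ i' ℓ', (⟨i, ℓ⟩ : Σ i : Fin 7, Fin (μ i)) ≠ ⟨i', ℓ'⟩ →
      Disjoint (B' i ℓ) (B' i' ℓ'))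
    (hAB : ∀ i h i' h', Disjoint (A i h) (B i' h'))
    (hAA' : ∀ i h i' ℓ', Disjoint (A i h) (A' i' ℓ'))
    (hAB' : ∀ i h i' ℓ', Disjoint (A i h) (B' i' ℓ'))
    (hBA' : ∀ i h i' ℓ', Disjoint (B i h) (A' i' ℓ'))
    (hBB' : ∀ i h i' ℓ', Disjoint (B i h) (B' i' ℓ'))
    (hA'B' : ∀ i ℓ i' ℓ', Disjoint (A' i ℓ) (B' i' ℓ'))
    (hcover : ∀ c : C, c ∈ orig ∨ (∃ i h, c ∈ A i h) ∨ (∃ i h, c ∈ B i h) ∨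
      (∃ i ℓ, c ∈ A' i ℓ) ∨ (∃ i ℓ, c ∈ B' i ℓ))
    (pos : (Fin 7 ⊕ Fin 7) → C → ℕ)
    (hbij : ∀ v, Set.BijOn (pos v) Set.univ (Set.Icc 1 (Fintype.card C)))
    (hv : ∀ i : Fin 7, Stacked (pos (Sum.inl i))
      ((List.ofFn (fun h : Fin (ν i) => [sE i h, A i h])).flatten ++
        (List.ofFn (fun ℓ : Fin (μ i) => [({y i ℓ} : Finset C), A' i ℓ])).flatten))
    (hu : ∀ i : Fin 7, Stacked (pos (Sum.inr i))
      ((List.ofFn (fun h : Fin (ν i) => [sE i h, B i h])).flatten ++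
        (List.ofFn (fun ℓ : Fin (μ i) => [({y i ℓ} : Finset C), B' i ℓ])).flatten))
    (hvA : ∀ i i' h, i' ≠ i → RanksConsec (pos (Sum.inl i)) (A i' h))
    (hvA' : ∀ i i' ℓ, i' ≠ i → RanksConsec (pos (Sum.inl i)) (A' i' ℓ))
    (hvB : ∀ i i' h, RanksConsec (pos (Sum.inl i)) (B i' h))
    (hvB' : ∀ i i' ℓ, RanksConsec (pos (Sum.inl i)) (B' i' ℓ))
    (huB : ∀ i i' h, i' ≠ i → RanksConsec (pos (Sum.inr i)) (B i' h))
    (huB' : ∀ i i' ℓ, i' ≠ i → RanksConsec (pos (Sum.inr i)) (B' i' ℓ))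
    (huA : ∀ i i' h, RanksConsec (pos (Sum.inr i)) (A i' h))
    (huA' : ∀ i i' ℓ, RanksConsec (pos (Sum.inr i)) (A' i' ℓ)) :
    (∃ P : Finset (Finset C), P.card ≤ Fintype.card C / 3 ∧
        (∀ X ∈ P, X.Nonempty ∧ X.card ≤ 3 ∧
          ∃ v₁ v₂ : Fin 7 ⊕ Fin 7, v₁ ≠ v₂ ∧
            RanksConsec (pos v₁) X ∧ RanksConsec (pos v₂) X) ∧
        (∀ c : C, ∃ X ∈ P, c ∈ X) ∧
        (∀ X ∈ P, ∀ Y ∈ P, X ≠ Y → Disjoint X Y)) ↔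
      (∃ SS' ⊆ SS, SS'.card = k ∧
        (∀ T ∈ SS', ∀ T' ∈ SS', T ≠ T' → Disjoint T T') ∧
        SS'.sup id = orig) :=
  stmt_9_general k orig horig SS hSS ν μ sE hpart hmem y hyrange A B A' B' hA3 hB3 hA'3 hB'3 hAo hBo
    hA'o hB'o hAA hBB hA'A' hB'B' hAB hAA' hAB' hBA' hBB' hA'B' hcover pos hbij hv hu hvB hvB' huA
    huA'
end

section
/- Let G be a simple graph on a finite vertex set U and let k ≥ 1 be an integer. Define G' as the simple graph on vertex set U × {1,…,k} in which two distinct vertices (u,i) and (v,j) are adjacent exactly if u = v or {u,v} is an edge of G. Then G has a perfect code of size k if and only if G' has a perfect code that contains exactly one vertex from U × {i} for each i ∈ {1,…,k}. -/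
/-!
In `G'` the closed neighbourhood of `(v, j)` is `N[v] × Fin k`, so a set `T ⊆ U × Fin k` is a
perfect code of `G'` exactly when no two of its elements share a first coordinate and its
projection to `U` is a perfect code of `G`. Having one element in each layer `U × {i}` then
says that `T` is the graph of a bijection from `Fin k` onto that projection, which therefore has
`k` elements.
-/

open Finset

section

variable {α ι : Type*}

/-- `R u v` stands for `u ∈ N[v]`. -/
def IsPerfectCode (R : α → α → Prop) (S : Finset α) : Prop :=
  ∀ v, ∃! u, u ∈ S ∧ R u v

theorem IsPerfectCode.injOn_fst {R : α → α → Prop} (hR : ∀ a, R a a) {T : Finset (α × ι)}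
    (hT : IsPerfectCode (fun y x => R y.1 x.1) T) : Set.InjOn Prod.fst (T : Set (α × ι)) := by
  intro y₁ h₁ y₂ h₂ h
  obtain ⟨y, -, huniq⟩ := hT y₁
  exact (huniq y₁ ⟨h₁, hR _⟩).trans (huniq y₂ ⟨h₂, (h ▸ hR y₁.1 : R y₂.1 y₁.1)⟩).symm

theorem isPerfectCode_fst_iff [DecidableEq α] [Nonempty ι] {R : α → α → Prop}
    (hR : ∀ a, R a a) {T : Finset (α × ι)} :
    IsPerfectCode (fun y x => R y.1 x.1) T ↔
      Set.InjOn Prod.fst (T : Set (α × ι)) ∧ IsPerfectCode R (T.image Prod.fst) := by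
  refine ⟨fun hT => ⟨hT.injOn_fst hR, fun v => ?_⟩, fun ⟨hinj, hS⟩ x => ?_⟩
  · obtain ⟨y, ⟨hy, hyv⟩, huniq⟩ := hT (v, Classical.arbitrary ι)
    refine ⟨y.1, ⟨mem_image_of_mem _ hy, hyv⟩, ?_⟩
    rintro _ ⟨hu, huv⟩
    obtain ⟨z, hz, rfl⟩ := mem_image.1 hu
    exact congrArg Prod.fst (huniq z ⟨hz, huv⟩)
  · obtain ⟨u, ⟨hu, hux⟩, huniq⟩ := hS x.1
    obtain ⟨y, hy, rfl⟩ := mem_image.1 hu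
    exact ⟨y, ⟨hy, hux⟩, fun z ⟨hz, hzx⟩ =>
      hinj hz hy (huniq z.1 ⟨mem_image_of_mem _ hz, hzx⟩)⟩

theorem card_eq_card_of_forall_card_filter_snd_eq_one [Fintype ι] [DecidableEq ι]
    {T : Finset (α × ι)} (hT : ∀ i, (T.filter (·.2 = i)).card = 1) : T.card = Fintype.card ι := by
  rw [card_eq_sum_card_fiberwise (fun y _ => mem_univ y.2)]
  simp [hT]

theorem exists_injOn_fst_image_fst_eq [Fintype ι] [DecidableEq α] [DecidableEq ι]
    {S : Finset α} (hS : S.card = Fintype.card ι) :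
    ∃ T : Finset (α × ι), Set.InjOn Prod.fst (T : Set (α × ι)) ∧ T.image Prod.fst = S ∧
      ∀ i, (T.filter (·.2 = i)).card = 1 := by
  obtain ⟨e⟩ := Fintype.card_eq.1 ((Fintype.card_coe S).trans hS)
  refine ⟨univ.image fun i => ((e.symm i : α), i), ?_, ?_, fun i => ?_⟩
  · simp only [coe_image, coe_univ, Set.image_univ]
    rintro _ ⟨i, rfl⟩ _ ⟨j, rfl⟩ h
    simp_all
  · ext a
    simp only [image_image, mem_image, mem_univ, true_and, Function.comp_def]
    exact ⟨by rintro ⟨i, rfl⟩; exact (e.symm i).2, fun ha => ⟨e ⟨a, ha⟩, by simp⟩⟩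
  · refine card_eq_one.2 ⟨((e.symm i : α), i), ?_⟩
    ext y
    simp only [mem_filter, mem_image, mem_univ, true_and, mem_singleton]
    constructor
    · rintro ⟨⟨j, rfl⟩, rfl⟩; rfl
    · rintro rfl; exact ⟨⟨i, rfl⟩, rfl⟩

theorem eq_or_ne_and_iff {a b : α} {p : Prop} (h : a = b → p) : (a = b ∨ (a ≠ b ∧ p)) ↔ p := by
  by_cases hab : a = b <;> simp [hab, h]

end

theorem stmt_10_general {U : Type*} [DecidableEq U] (G : SimpleGraph U)
    (k : ℕ) (hk : 1 ≤ k) :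
    (∃ S : Finset U, S.card = k ∧
        ∀ v : U, ∃! u : U, u ∈ S ∧ (u = v ∨ G.Adj u v)) ↔
      (∃ S' : Finset (U × Fin k),
        (∀ x : U × Fin k, ∃! y : U × Fin k, y ∈ S' ∧
            (y = x ∨ (y ≠ x ∧ (y.1 = x.1 ∨ G.Adj y.1 x.1)))) ∧
        (∀ i : Fin k, (S'.filter (fun y => y.2 = i)).card = 1)) := by
  have : Nonempty (Fin k) := ⟨⟨0, hk⟩⟩
  have hcode (T : Finset (U × Fin k)) :=
    isPerfectCode_fst_iff (T := T) (R := fun u v => u = v ∨ G.Adj u v) fun _ => Or.inl rfl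
  have hadj (y x : U × Fin k) : (y = x ∨ (y ≠ x ∧ (y.1 = x.1 ∨ G.Adj y.1 x.1))) ↔
      (y.1 = x.1 ∨ G.Adj y.1 x.1) :=
    eq_or_ne_and_iff fun h => Or.inl (congrArg Prod.fst h)
  simp only [hadj]
  constructor
  · rintro ⟨S, hcard, hS⟩
    obtain ⟨T, hinj, rfl, hfib⟩ :=
      exists_injOn_fst_image_fst_eq (hcard.trans (Fintype.card_fin k).symm)
    exact ⟨T, (hcode T).2 ⟨hinj, hS⟩, hfib⟩
  · rintro ⟨T, hT, hfib⟩
    obtain ⟨hinj, hS⟩ := (hcode T).1 hT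
    refine ⟨T.image Prod.fst, ?_, hS⟩
    rw [card_image_of_injOn hinj, card_eq_card_of_forall_card_filter_snd_eq_one hfib,
      Fintype.card_fin]

/-- Let `G` be a simple graph on a finite vertex set `U` and `k ≥ 1`. Let
`G'` be the graph on `U × Fin k` where distinct `(u,i)` and `(v,j)` are adjacent iff `u = v`
or `G.Adj u v`. Then `G` has a perfect code of size `k` (a set `S` such that every vertex lies
in the closed neighborhood of exactly one member of `S`) iff `G'` has a perfect code that
contains exactly one vertex from `U × {i}` for each `i`. -/
theorem stmt_10 {U : Type*} [Fintype U] [DecidableEq U] (G : SimpleGraph U)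
    (k : ℕ) (hk : 1 ≤ k) :
    (∃ S : Finset U, S.card = k ∧
        ∀ v : U, ∃! u : U, u ∈ S ∧ (u = v ∨ G.Adj u v)) ↔
      (∃ S' : Finset (U × Fin k),
        (∀ x : U × Fin k, ∃! y : U × Fin k, y ∈ S' ∧
            (y = x ∨ (y ≠ x ∧ (y.1 = x.1 ∨ G.Adj y.1 x.1)))) ∧
        (∀ i : Fin k, (S'.filter (fun y => y.2 = i)).card = 1)) :=
  stmt_10_general G k hk
end

section
/- Let k ≥ 1, let X = {x_1,…,x_{3k}} be a set of 3k elements, and let S = {S_1,…,S_{3k}} be a family of 3-element subsets of X such that every element of X lies in exactly 3 members of S. Let E=(C,V) be any election with candidate set C = {s_j, s_j^+, s_j^- : j ∈ {1,…,3k}} and the following voters: 9k² type-1 voters, each ranking, from top, s_1^+, s_1, s_1^-, s_2^+, s_2, s_2^-, …, s_{3k}^+, s_{3k}, s_{3k}^-; 9k² type-2 voters, each ranking, from top, s_1^-, s_1, s_1^+, s_2^-, s_2, s_2^+, …, s_{3k}^-, s_{3k}, s_{3k}^+; and, for each pair (x_i, S_j) with x_i ∈ S_j, one coverage voter v_{i,j}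 whose ranking agrees with a type-1 voter's except that its j-th block is s_j^-, s_j^+, s_j and, for every ℓ ≠ j with x_i ∈ S_ℓ, its ℓ-th block is s_ℓ^+, s_ℓ^-, s_ℓ. Then there exist a set W ⊆ V of at least 18k²+3k voters and a partition of C into at most 6k nonempty parts, each of size at most 2 and each ranked consecutively by every voter in W, if and only if there exist k pairwise disjoint members of S whose union is X. -/
/-- offsets within the `j`-th block (candidate `(j, τ)` with `τ = 0 ↦ s_j`, `τ = 1 ↦ s_j⁺`,
`τ = 2 ↦ s_j⁻`) for a type-1 voter: order `s⁺, s, s⁻`. -/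
def off1 (τ : Fin 3) : ℕ := if τ = 0 then 2 else if τ = 1 then 1 else 3

/-- offsets for a type-2 voter: order `s⁻, s, s⁺`. -/
def off2 (τ : Fin 3) : ℕ := if τ = 0 then 2 else if τ = 1 then 3 else 1

/-- offsets in the `j`-th block of coverage voter `v_{i,j}`: order `s⁻, s⁺, s`. -/
def offSel (τ : Fin 3) : ℕ := if τ = 0 then 3 else if τ = 1 then 2 else 1

/-- offsets in an `ℓ`-th block (`ℓ ≠ j`, `x_i ∈ S_ℓ`) of coverage voter `v_{i,j}`:
order `s⁺, s⁻, s`. -/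
def offOth (τ : Fin 3) : ℕ := if τ = 0 then 3 else if τ = 1 then 1 else 2

/-!
Since `W` has more than `18k²` voters it contains a type-1 voter, a type-2 voter and at least
`3k` coverage voters. A pair ranked consecutively by the first two is `{s_j, s_j⁺}` or
`{s_j, s_j⁻}`, and `9k` candidates in at most `6k` parts of size at most two need `3k` pairs,
so every block contributes exactly one pair; let `J` be the blocks paired as `{s_j, s_j⁺}`.
A coverage voter `v_{i,j}` in `W` forces `j ∈ J` and `ℓ ∉ J` for every other `S_ℓ ∋ x_i`, so
`W` contains at most one, hence exactly one, coverage voter per element, and `J` is an exact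
cover. Conversely, an exact cover `J` is realised by all type-1 and type-2 voters together with
the `v_{i,j}` for `j ∈ J`, and the parts `{s_j, s_j⁺}, {s_j⁻}` for `j ∈ J` and
`{s_j, s_j⁻}, {s_j⁺}` otherwise.
-/

open Finset

section Consecutive

variable {C : Type*} [DecidableEq C]

lemma ranksConsec_singleton (p : C → ℕ) (a : C) : RanksConsec p {a} := by
  simp [RanksConsec]

lemma ranksConsec_pair_iff {p : C → ℕ} {a b : C} (hab : a ≠ b) :
    RanksConsec p {a, b} ↔ p a = p b + 1 ∨ p b = p a + 1 := by
  simp only [RanksConsec, insert_nonempty, image_insert, image_singleton, singleton_nonempty,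
    max'_insert, max'_singleton, min'_insert, min'_singleton, card_pair hab, Nat.add_one_sub_one,
    forall_const]
  omega

end Consecutive

section Partition

variable {α : Type*} [Fintype α] [DecidableEq α] {P : Finset (Finset α)}

lemma sum_card_eq_card_of_partition (hcover : ∀ a, ∃ X ∈ P, a ∈ X)
    (hdisj : ∀ X ∈ P, ∀ Y ∈ P, X ≠ Y → Disjoint X Y) :
    ∑ X ∈ P, #X = Fintype.card α := by
  have hunion : P.biUnion id = univ := eq_univ_of_forall fun a => mem_biUnion.2 (hcover a)
  simpa [hunion] using (card_biUnion (t := id) hdisj).symm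

/-- Counting shows that there are at least `#s` pairs, and the parts through `s` contain them
all. -/
lemma card_eq_two_of_mem_part (hsize : ∀ X ∈ P, X.Nonempty ∧ #X ≤ 2)
    (hcover : ∀ a, ∃ X ∈ P, a ∈ X) (hdisj : ∀ X ∈ P, ∀ Y ∈ P, X ≠ Y → Disjoint X Y)
    {s : Finset α} (hmeet : ∀ X ∈ P, #X = 2 → ∃ a ∈ s, a ∈ X)
    (hcard : #P + #s ≤ Fintype.card α) {X : Finset α} (hX : X ∈ P) {a : α} (ha : a ∈ s)
    (haX : a ∈ X) : #X = 2 := by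
  have hpairs : #s ≤ #{Y ∈ P | #Y = 2} := by
    have : ∑ Y ∈ P, #Y ≤ ∑ Y ∈ P, (1 + if #Y = 2 then 1 else 0) := by
      refine sum_le_sum fun Y hY => ?_
      have := (hsize Y hY).1.card_pos
      have := (hsize Y hY).2
      split_ifs <;> omega
    rw [sum_card_eq_card_of_partition hcover hdisj, sum_add_distrib, ← card_filter] at this
    simp only [sum_const, smul_eq_mul, mul_one] at this
    omega
  choose part hpart hmem using hcover
  have part_eq : ∀ Y ∈ P, ∀ b ∈ Y, part b = Y := fun Y hY b hb =>
    by_contra fun h => disjoint_left.1 (hdisj _ (hpart b) Y hY h) (hmem b) hb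
  have hsub : {Y ∈ P | #Y = 2} ⊆ {Y ∈ s.image part | #Y = 2} := by
    intro Y hY
    rw [mem_filter] at hY ⊢
    obtain ⟨b, hb, hbY⟩ := hmeet Y hY.1 hY.2
    exact ⟨mem_image.2 ⟨b, hb, part_eq Y hY.1 b hbY⟩, hY.2⟩
  have hQ : {Y ∈ s.image part | #Y = 2} = s.image part := by
    refine eq_of_subset_of_card_le (filter_subset _ _) ?_
    have := card_le_card hsub
    have := card_image_le (s := s) (f := part)
    omega
  have hpa : part a ∈ {Y ∈ s.image part | #Y = 2} := by
    rw [hQ]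
    exact mem_image_of_mem part ha
  rw [← part_eq X hX a haX]
  exact (mem_filter.1 hpa).2

end Partition

section ExactCover

variable {ι α : Type*} [DecidableEq α] [Fintype α] {S : ι → Finset α} {J : Finset ι}

lemma exactCover_of_forall_exists_unique (h : ∀ a, ∃ j ∈ J, a ∈ S j ∧ ∀ ℓ ∈ J, a ∈ S ℓ → ℓ = j) :
    (∀ j ∈ J, ∀ j' ∈ J, j ≠ j' → Disjoint (S j) (S j')) ∧ J.biUnion S = univ := by
  refine ⟨fun j hj j' hj' hne => disjoint_left.2 fun a ha ha' => hne ?_, ?_⟩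
  · obtain ⟨_, -, -, huniq⟩ := h a
    rw [huniq j hj ha, huniq j' hj' ha']
  · exact eq_univ_of_forall fun a =>
      let ⟨j, hj, ha, _⟩ := h a
      mem_biUnion.2 ⟨j, hj, ha⟩

lemma card_mul_eq_of_exactCover {m : ℕ} (hS : ∀ j, #(S j) = m)
    (hdisj : ∀ j ∈ J, ∀ j' ∈ J, j ≠ j' → Disjoint (S j) (S j')) (hcover : J.biUnion S = univ) :
    #J * m = Fintype.card α := by
  rw [← card_univ, ← hcover, card_biUnion hdisj, sum_congr rfl fun j _ => hS j, sum_const,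
    smul_eq_mul]

end ExactCover

section SumCount

lemma nonempty_toLeft_and_card_toRight_toRight {N m : ℕ} {β : Type*} [Fintype β]
    (hβ : Fintype.card β ≤ N) {W : Finset (Fin N ⊕ (Fin N ⊕ β))} (hm : 0 < m)
    (hW : 2 * N + m ≤ #W) :
    W.toLeft.Nonempty ∧ W.toRight.toLeft.Nonempty ∧ m ≤ #W.toRight.toRight := by
  have := W.card_toLeft_add_card_toRight
  have := W.toRight.card_toLeft_add_card_toRight
  have := card_le_univ W.toLeft
  have := card_le_univ W.toRight.toLeft
  have := card_le_univ W.toRight.toRight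
  simp only [Fintype.card_fin] at *
  refine ⟨card_pos.1 ?_, card_pos.1 ?_, ?_⟩ <;> omega

end SumCount

section Blocks

variable {n : ℕ}

def blockPos (o : Fin n → Fin 3 → ℕ) (c : Fin n × Fin 3) : ℕ := 3 * c.1 + o c.1 c.2

lemma ranksConsec_blockPos_pair_iff {o : Fin n → Fin 3 → ℕ} {j : Fin n} {σ τ : Fin 3}
    (hστ : σ ≠ τ) :
    RanksConsec (blockPos o) {(j, σ), (j, τ)} ↔ o j σ = o j τ + 1 ∨ o j τ = o j σ + 1 := by
  rw [ranksConsec_pair_iff (by simpa using hστ)]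
  simp only [blockPos]
  omega

lemma off1_add_off2 (τ : Fin 3) : off1 τ + off2 τ = 4 := by
  fin_cases τ <;> rfl

/-- The two positions of a candidate of block `j` add up to `6 j + 4`, so the pair lies in one
block, where `s_j⁺` and `s_j⁻` are never adjacent. -/
lemma exists_eq_blockPair_of_ranksConsec {a b : Fin n × Fin 3} (hab : a ≠ b)
    (h₁ : RanksConsec (blockPos fun _ => off1) {a, b})
    (h₂ : RanksConsec (blockPos fun _ => off2) {a, b}) :
    ∃ j, ({a, b} : Finset _) = {(j, 0), (j, 1)} ∨ ({a, b} : Finset _) = {(j, 0), (j, 2)} := by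
  obtain ⟨j, σ⟩ := a
  obtain ⟨j', τ⟩ := b
  rw [ranksConsec_pair_iff hab] at h₁ h₂
  simp only [blockPos] at h₁ h₂
  have := off1_add_off2 σ
  have := off1_add_off2 τ
  obtain rfl : j = j' := Fin.ext (by omega)
  refine ⟨j, ?_⟩
  fin_cases σ <;> fin_cases τ <;> simp_all [off1] <;>
    first | exact .inl (pair_comm _ _) | exact .inr (pair_comm _ _)

lemma exists_blockPair_mem {P : Finset (Finset (Fin n × Fin 3))} (hP : #P ≤ 2 * n)
    (hsize : ∀ X ∈ P, X.Nonempty ∧ #X ≤ 2) (hcover : ∀ c, ∃ X ∈ P, c ∈ X)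
    (hdisj : ∀ X ∈ P, ∀ Y ∈ P, X ≠ Y → Disjoint X Y)
    (hpair : ∀ X ∈ P, #X = 2 → ∃ j, X = {(j, 0), (j, 1)} ∨ X = {(j, 0), (j, 2)}) (j : Fin n) :
    {(j, 0), (j, 1)} ∈ P ∨ {(j, 0), (j, 2)} ∈ P := by
  set s := univ.image fun j : Fin n => (j, (0 : Fin 3))
  have hcard : #s = n := by
    rw [card_image_of_injective _ fun _ _ h => (Prod.ext_iff.1 h).1, card_fin]
  obtain ⟨X, hX, hjX⟩ := hcover (j, 0)
  have hX2 : #X = 2 := by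
    refine card_eq_two_of_mem_part hsize hcover hdisj (s := s) (fun Y hY hY2 => ?_) ?_ hX
      (mem_image_of_mem _ (mem_univ j)) hjX
    · obtain ⟨j', rfl | rfl⟩ := hpair Y hY hY2 <;> exact ⟨(j', 0), by simp [s]⟩
    · simp only [hcard, Fintype.card_prod, Fintype.card_fin]
      omega
  obtain ⟨j', rfl | rfl⟩ := hpair X hX hX2 <;> obtain rfl : j = j' := by simpa using hjX
  exacts [.inl hX, .inr hX]

end Blocks

section Election

variable {n : ℕ}

abbrev Incidence (S : Fin n → Finset (Fin n)) := {p : Fin n × Fin n // p.1 ∈ S p.2}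

/-- Block offsets of the coverage voter `v_{i,j}`, where `q = (i, j)`. -/
def coverOffset (S : Fin n → Finset (Fin n)) (q : Incidence S) (ℓ : Fin n) (τ : Fin 3) : ℕ :=
  if ℓ = q.1.2 then offSel τ else if q.1.1 ∈ S ℓ then offOth τ else off1 τ

variable {S : Fin n → Finset (Fin n)}

lemma not_ranksConsec_coverOffset_self (q : Incidence S) :
    ¬ RanksConsec (blockPos (coverOffset S q)) {(q.1.2, 0), (q.1.2, 2)} := by
  rw [ranksConsec_blockPos_pair_iff (by decide)]
  simp [coverOffset, offSel]

lemma not_ranksConsec_coverOffset_of_mem (q : Incidence S) {ℓ : Fin n} (hℓ : ℓ ≠ q.1.2)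
    (hi : q.1.1 ∈ S ℓ) : ¬ RanksConsec (blockPos (coverOffset S q)) {(ℓ, 0), (ℓ, 1)} := by
  rw [ranksConsec_blockPos_pair_iff (by decide)]
  simp [coverOffset, hℓ, hi, offOth]

def blockParts (J : Finset (Fin n)) (j : Fin n) : Finset (Finset (Fin n × Fin 3)) :=
  if j ∈ J then {{(j, 0), (j, 1)}, {(j, 2)}} else {{(j, 0), (j, 2)}, {(j, 1)}}

variable {J : Finset (Fin n)}

lemma fst_eq_of_mem_blockParts {j : Fin n} {X : Finset (Fin n × Fin 3)} (hX : X ∈ blockParts J j)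
    {c : Fin n × Fin 3} (hc : c ∈ X) : c.1 = j := by
  unfold blockParts at hX
  split_ifs at hX <;> simp only [mem_insert, mem_singleton] at hX <;> rcases hX with rfl | rfl <;>
    simp only [mem_insert, mem_singleton] at hc <;> rcases hc with rfl | rfl <;> rfl

lemma ranksConsec_of_mem_blockParts {p : Fin n × Fin 3 → ℕ}
    (hJ : ∀ j ∈ J, RanksConsec p {(j, 0), (j, 1)}) (hJc : ∀ j ∉ J, RanksConsec p {(j, 0), (j, 2)})
    {j : Fin n} {X : Finset (Fin n × Fin 3)} (hX : X ∈ blockParts J j) : RanksConsec p X := by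
  unfold blockParts at hX
  split_ifs at hX with hj <;> simp only [mem_insert, mem_singleton] at hX <;>
    rcases hX with rfl | rfl
  exacts [hJ j hj, ranksConsec_singleton _ _, hJc j hj, ranksConsec_singleton _ _]

lemma card_blockParts_le (j : Fin n) : #(blockParts J j) ≤ 2 := by
  unfold blockParts
  split_ifs <;> exact card_le_two

lemma nonempty_and_card_le_of_mem_blockParts {j : Fin n} {X : Finset (Fin n × Fin 3)}
    (hX : X ∈ blockParts J j) : X.Nonempty ∧ #X ≤ 2 := by
  unfold blockParts at hX
  split_ifs at hX <;> simp only [mem_insert, mem_singleton] at hX <;> rcases hX with rfl | rfl <;>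
    exact ⟨by simp, by simp⟩

lemma exists_mem_blockParts (c : Fin n × Fin 3) : ∃ X ∈ blockParts J c.1, c ∈ X := by
  obtain ⟨j, τ⟩ := c
  unfold blockParts
  split_ifs <;> fin_cases τ <;> simp

lemma disjoint_of_mem_blockParts {j j' : Fin n} {X Y : Finset (Fin n × Fin 3)}
    (hX : X ∈ blockParts J j) (hY : Y ∈ blockParts J j') (hXY : X ≠ Y) : Disjoint X Y := by
  rcases eq_or_ne j j' with rfl | hjj'
  · unfold blockParts at hX hY
    split_ifs at hX hY <;> simp only [mem_insert, mem_singleton] at hX hY <;>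
      rcases hX with rfl | rfl <;> rcases hY with rfl | rfl <;> simp_all
  · exact disjoint_left.2 fun c hcX hcY =>
      hjj' ((fst_eq_of_mem_blockParts hX hcX).symm.trans (fst_eq_of_mem_blockParts hY hcY))

lemma ranksConsec_off1_of_mem_blockParts {j : Fin n} {X : Finset (Fin n × Fin 3)}
    (hX : X ∈ blockParts J j) : RanksConsec (blockPos fun _ => off1) X :=
  ranksConsec_of_mem_blockParts
    (fun _ _ => by rw [ranksConsec_blockPos_pair_iff (by decide)]; simp [off1])
    (fun _ _ => by rw [ranksConsec_blockPos_pair_iff (by decide)]; simp [off1]) hX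

lemma ranksConsec_off2_of_mem_blockParts {j : Fin n} {X : Finset (Fin n × Fin 3)}
    (hX : X ∈ blockParts J j) : RanksConsec (blockPos fun _ => off2) X :=
  ranksConsec_of_mem_blockParts
    (fun _ _ => by rw [ranksConsec_blockPos_pair_iff (by decide)]; simp [off2])
    (fun _ _ => by rw [ranksConsec_blockPos_pair_iff (by decide)]; simp [off2]) hX

lemma ranksConsec_coverOffset_of_mem_blockParts
    (hJdisj : ∀ j ∈ J, ∀ j' ∈ J, j ≠ j' → Disjoint (S j) (S j')) {q : Incidence S}
    (hq : q.1.2 ∈ J) {j : Fin n} {X : Finset (Fin n × Fin 3)} (hX : X ∈ blockParts J j) :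
    RanksConsec (blockPos (coverOffset S q)) X := by
  refine ranksConsec_of_mem_blockParts (fun ℓ hℓ => ?_) (fun ℓ hℓ => ?_) hX <;>
    rw [ranksConsec_blockPos_pair_iff (by decide)]
  · rcases eq_or_ne ℓ q.1.2 with rfl | hne
    · simp [coverOffset, offSel]
    · have hi : q.1.1 ∉ S ℓ := disjoint_right.1 (hJdisj ℓ hℓ _ hq hne) q.2
      simp [coverOffset, hne, hi, off1]
  · have hne : ℓ ≠ q.1.2 := fun h => hℓ (h ▸ hq)
    by_cases hi : q.1.1 ∈ S ℓ <;> simp [coverOffset, hne, hi, offOth, off1]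

end Election

section Reduction

variable {k : ℕ} {S : Fin (3 * k) → Finset (Fin (3 * k))}
  {pos : Fin (9 * k ^ 2) ⊕ (Fin (9 * k ^ 2) ⊕ Incidence S) → Fin (3 * k) × Fin 3 → ℕ}

theorem exists_exactCover_of_consecutive_partition (hk : 1 ≤ k) (hS3 : ∀ j, #(S j) = 3)
    (hpos1 : ∀ v, pos (.inl v) = blockPos fun _ => off1)
    (hpos2 : ∀ v, pos (.inr (.inl v)) = blockPos fun _ => off2)
    (hposc : ∀ q, pos (.inr (.inr q)) = blockPos (coverOffset S q))
    {W : Finset (Fin (9 * k ^ 2) ⊕ (Fin (9 * k ^ 2) ⊕ Incidence S))} (hW : 18 * k ^ 2 + 3 * k ≤ #W)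
    {P : Finset (Finset (Fin (3 * k) × Fin 3))} (hP : #P ≤ 6 * k)
    (hParts : ∀ X ∈ P, X.Nonempty ∧ #X ≤ 2 ∧ ∀ v ∈ W, RanksConsec (pos v) X)
    (hcover : ∀ c, ∃ X ∈ P, c ∈ X) (hdisj : ∀ X ∈ P, ∀ Y ∈ P, X ≠ Y → Disjoint X Y) :
    ∃ J : Finset (Fin (3 * k)), #J = k ∧
      (∀ j ∈ J, ∀ j' ∈ J, j ≠ j' → Disjoint (S j) (S j')) ∧ J.biUnion S = univ := by
  set Wc := W.toRight.toRight
  have hinc : Fintype.card (Incidence S) ≤ 9 * k ^ 2 := by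
    refine (Fintype.card_subtype_le _).trans (le_of_eq ?_)
    simp only [Fintype.card_prod, Fintype.card_fin]
    ring
  obtain ⟨⟨v₁, hv₁⟩, ⟨v₂, hv₂⟩, hWc⟩ :=
    nonempty_toLeft_and_card_toRight_toRight hinc (W := W) (m := 3 * k) (by omega) (by omega)
  have hblock (j : Fin (3 * k)) : {(j, 0), (j, 1)} ∈ P ∨ {(j, 0), (j, 2)} ∈ P := by
    refine exists_blockPair_mem (by omega) (fun X hX => ⟨(hParts X hX).1, (hParts X hX).2.1⟩)
      hcover hdisj (fun X hX hX2 => ?_) j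
    obtain ⟨a, b, hab, rfl⟩ := card_eq_two.1 hX2
    have h₁ := (hParts _ hX).2.2 _ (mem_toLeft.1 hv₁)
    have h₂ := (hParts _ hX).2.2 _ (mem_toRight.1 (mem_toLeft.1 hv₂))
    rw [hpos1] at h₁
    rw [hpos2] at h₂
    exact exists_eq_blockPair_of_ranksConsec hab h₁ h₂
  set J := univ.filter fun j : Fin (3 * k) => {(j, 0), (j, 1)} ∈ P
  have hsel : ∀ q ∈ Wc, q.1.2 ∈ J ∧ ∀ ℓ ∈ J, q.1.1 ∈ S ℓ → ℓ = q.1.2 := by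
    intro q hq
    have hconsec : ∀ X ∈ P, RanksConsec (blockPos (coverOffset S q)) X := fun X hX =>
      hposc q ▸ (hParts X hX).2.2 _ (mem_toRight.1 (mem_toRight.1 hq))
    refine ⟨mem_filter.2 ⟨mem_univ _, (hblock _).resolve_right fun h =>
      not_ranksConsec_coverOffset_self q (hconsec _ h)⟩, fun ℓ hℓ hi => ?_⟩
    by_contra hne
    exact not_ranksConsec_coverOffset_of_mem q hne hi (hconsec _ (mem_filter.1 hℓ).2)
  have hsurj : ∀ i ∈ (univ : Finset (Fin (3 * k))), ∃ q ∈ Wc, q.1.1 = i := by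
    refine surjOn_of_injOn_of_card_le (fun q : Incidence S => q.1.1) (fun _ _ => mem_univ _)
      (fun q hq q' hq' hqq' => ?_) (by simpa using hWc)
    have hi : q.1.1 = q'.1.1 := hqq'
    have hj : q'.1.2 = q.1.2 := (hsel q hq).2 _ (hsel q' hq').1 (hi ▸ q'.2)
    exact Subtype.ext (Prod.ext hi hj.symm)
  obtain ⟨hJdisj, hJcover⟩ := exactCover_of_forall_exists_unique (S := S) (J := J) fun i => by
    obtain ⟨q, hq, rfl⟩ := hsurj i (mem_univ i)
    exact ⟨q.1.2, (hsel q hq).1, q.2, (hsel q hq).2⟩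
  refine ⟨J, ?_, hJdisj, hJcover⟩
  have := card_mul_eq_of_exactCover hS3 hJdisj hJcover
  simp only [Fintype.card_fin] at this
  omega

theorem exists_consecutive_partition_of_exactCover
    (hpos1 : ∀ v, pos (.inl v) = blockPos fun _ => off1)
    (hpos2 : ∀ v, pos (.inr (.inl v)) = blockPos fun _ => off2)
    (hposc : ∀ q, pos (.inr (.inr q)) = blockPos (coverOffset S q)) {J : Finset (Fin (3 * k))}
    (hJdisj : ∀ j ∈ J, ∀ j' ∈ J, j ≠ j' → Disjoint (S j) (S j')) (hJcover : J.biUnion S = univ) :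
    ∃ W : Finset (Fin (9 * k ^ 2) ⊕ (Fin (9 * k ^ 2) ⊕ Incidence S)), 18 * k ^ 2 + 3 * k ≤ #W ∧
      ∃ P : Finset (Finset (Fin (3 * k) × Fin 3)), #P ≤ 6 * k ∧
        (∀ X ∈ P, X.Nonempty ∧ #X ≤ 2 ∧ ∀ v ∈ W, RanksConsec (pos v) X) ∧
        (∀ c, ∃ X ∈ P, c ∈ X) ∧ (∀ X ∈ P, ∀ Y ∈ P, X ≠ Y → Disjoint X Y) := by
  choose sel hselJ hsel using fun i => mem_biUnion.1 (hJcover ▸ mem_univ i)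
  set Wc := univ.filter fun q : Incidence S => q.1.2 ∈ J
  have hWc : 3 * k ≤ #Wc := by
    simpa using card_le_card_of_injOn (s := univ) (fun i => (⟨(i, sel i), hsel i⟩ : Incidence S))
      (fun i _ => by simpa [Wc] using hselJ i)
      (fun i _ i' _ h => congrArg (fun q : Incidence S => q.1.1) h)
  refine ⟨univ.disjSum (univ.disjSum Wc), ?_, univ.biUnion (blockParts J), ?_, ?_, ?_, ?_⟩
  · simp only [card_disjSum, card_univ, Fintype.card_fin]
    omega
  · refine card_biUnion_le.trans ((sum_le_sum fun j _ => card_blockParts_le j).trans ?_)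
    simp only [sum_const, card_univ, Fintype.card_fin, smul_eq_mul]
    omega
  · intro X hX
    obtain ⟨j, -, hX⟩ := mem_biUnion.1 hX
    refine ⟨(nonempty_and_card_le_of_mem_blockParts hX).1,
      (nonempty_and_card_le_of_mem_blockParts hX).2, ?_⟩
    rintro (v | v | q) hv
    · exact hpos1 v ▸ ranksConsec_off1_of_mem_blockParts hX
    · exact hpos2 v ▸ ranksConsec_off2_of_mem_blockParts hX
    · exact hposc q ▸ ranksConsec_coverOffset_of_mem_blockParts hJdisj (by simpa [Wc] using hv) hX
  · intro c
    obtain ⟨X, hX, hc⟩ := exists_mem_blockParts (J := J) c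
    exact ⟨X, mem_biUnion.2 ⟨c.1, mem_univ _, hX⟩, hc⟩
  · intro X hX Y hY hXY
    obtain ⟨j, -, hX⟩ := mem_biUnion.1 hX
    obtain ⟨j', -, hY⟩ := mem_biUnion.1 hY
    exact disjoint_of_mem_blockParts hX hY hXY

end Reduction

theorem stmt_12_general (k : ℕ) (hk : 1 ≤ k)
    (S : Fin (3 * k) → Finset (Fin (3 * k)))
    (hS3 : ∀ j, (S j).card = 3)
    (pos : (Fin (9 * k ^ 2) ⊕ (Fin (9 * k ^ 2) ⊕
        {p : Fin (3 * k) × Fin (3 * k) // p.1 ∈ S p.2})) →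
      (Fin (3 * k) × Fin 3) → ℕ)
    (hpos1 : ∀ (v : Fin (9 * k ^ 2)) (c : Fin (3 * k) × Fin 3),
      pos (Sum.inl v) c = 3 * (c.1 : ℕ) + off1 c.2)
    (hpos2 : ∀ (v : Fin (9 * k ^ 2)) (c : Fin (3 * k) × Fin 3),
      pos (Sum.inr (Sum.inl v)) c = 3 * (c.1 : ℕ) + off2 c.2)
    (hposc : ∀ (p : {p : Fin (3 * k) × Fin (3 * k) // p.1 ∈ S p.2})
        (c : Fin (3 * k) × Fin 3),
      pos (Sum.inr (Sum.inr p)) c = 3 * (c.1 : ℕ) +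
        (if c.1 = p.1.2 then offSel c.2
         else if p.1.1 ∈ S c.1 then offOth c.2 else off1 c.2)) :
    (∃ W : Finset (Fin (9 * k ^ 2) ⊕ (Fin (9 * k ^ 2) ⊕
          {p : Fin (3 * k) × Fin (3 * k) // p.1 ∈ S p.2})),
        18 * k ^ 2 + 3 * k ≤ W.card ∧
        ∃ P : Finset (Finset (Fin (3 * k) × Fin 3)), P.card ≤ 6 * k ∧
          (∀ X ∈ P, X.Nonempty ∧ X.card ≤ 2 ∧ ∀ v ∈ W, RanksConsec (pos v) X) ∧
          (∀ c, ∃ X ∈ P, c ∈ X) ∧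
          (∀ X ∈ P, ∀ Y ∈ P, X ≠ Y → Disjoint X Y)) ↔
      (∃ J : Finset (Fin (3 * k)), J.card = k ∧
        (∀ j ∈ J, ∀ j' ∈ J, j ≠ j' → Disjoint (S j) (S j')) ∧
        J.biUnion S = Finset.univ) := by
  have h₁ (v) : pos (.inl v) = blockPos fun _ => off1 := funext (hpos1 v)
  have h₂ (v) : pos (.inr (.inl v)) = blockPos fun _ => off2 := funext (hpos2 v)
  have hc (q) : pos (.inr (.inr q)) = blockPos (coverOffset S q) := funext (hposc q)
  constructor
  · rintro ⟨W, hW, P, hP, hParts, hcover, hdisj⟩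
    exact exists_exactCover_of_consecutive_partition hk hS3 h₁ h₂ hc hW hP hParts hcover hdisj
  · rintro ⟨J, -, hJdisj, hJcover⟩
    exact exists_consecutive_partition_of_exactCover h₁ h₂ hc hJdisj hJcover

/-- Let `S₁,…,S_{3k}` be an RX3C family on `X = {x_1,…,x_{3k}}` (each set
has 3 elements and each element lies in exactly 3 sets). Consider the election with candidates
`s_j, s_j⁺, s_j⁻` for `j ∈ [3k]` (candidate `(j,τ) : Fin (3k) × Fin 3`), `9k²` type-1 voters,
`9k²` type-2 voters, and one coverage voter for each pair `(x_i, S_j)` with `x_i ∈ S_j`, with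
the rankings described above. Then there are a set `W` of at least `18k²+3k` voters and a
partition of the candidates into at most `6k` nonempty parts, each of size at most 2 and each
ranked consecutively by every voter in `W`, iff there are `k` pairwise disjoint members of the
family whose union is `X`. -/
theorem stmt_12 (k : ℕ) (hk : 1 ≤ k)
    (S : Fin (3 * k) → Finset (Fin (3 * k)))
    (hS3 : ∀ j, (S j).card = 3)
    (hocc : ∀ i, (Finset.univ.filter (fun j => i ∈ S j)).card = 3)
    (pos : (Fin (9 * k ^ 2) ⊕ (Fin (9 * k ^ 2) ⊕
        {p : Fin (3 * k) × Fin (3 * k) // p.1 ∈ S p.2})) →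
      (Fin (3 * k) × Fin 3) → ℕ)
    (hpos1 : ∀ (v : Fin (9 * k ^ 2)) (c : Fin (3 * k) × Fin 3),
      pos (Sum.inl v) c = 3 * (c.1 : ℕ) + off1 c.2)
    (hpos2 : ∀ (v : Fin (9 * k ^ 2)) (c : Fin (3 * k) × Fin 3),
      pos (Sum.inr (Sum.inl v)) c = 3 * (c.1 : ℕ) + off2 c.2)
    (hposc : ∀ (p : {p : Fin (3 * k) × Fin (3 * k) // p.1 ∈ S p.2})
        (c : Fin (3 * k) × Fin 3),
      pos (Sum.inr (Sum.inr p)) c = 3 * (c.1 : ℕ) +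
        (if c.1 = p.1.2 then offSel c.2
         else if p.1.1 ∈ S c.1 then offOth c.2 else off1 c.2)) :
    (∃ W : Finset (Fin (9 * k ^ 2) ⊕ (Fin (9 * k ^ 2) ⊕
          {p : Fin (3 * k) × Fin (3 * k) // p.1 ∈ S p.2})),
        18 * k ^ 2 + 3 * k ≤ W.card ∧
        ∃ P : Finset (Finset (Fin (3 * k) × Fin 3)), P.card ≤ 6 * k ∧
          (∀ X ∈ P, X.Nonempty ∧ X.card ≤ 2 ∧ ∀ v ∈ W, RanksConsec (pos v) X) ∧
          (∀ c, ∃ X ∈ P, c ∈ X) ∧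
          (∀ X ∈ P, ∀ Y ∈ P, X ≠ Y → Disjoint X Y)) ↔
      (∃ J : Finset (Fin (3 * k)), J.card = k ∧
        (∀ j ∈ J, ∀ j' ∈ J, j ≠ j' → Disjoint (S j) (S j')) ∧
        J.biUnion S = Finset.univ) :=
  stmt_12_general k hk S hS3 pos hpos1 hpos2 hposc
end
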